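/- arXiv:math/0205195 — 9 statements merged into one kernel-verified Lean document; each statement's English description precedes it below -/
import Mathlib

section
/- Let A be a unital C*-algebra with unit 1, let L : A → ℝ be a seminorm with L(1) = 0, and let μ : A → ℂ be a continuous linear functional with ‖μ‖ = 1 and μ(1) = 1. Then: (i) if r ≥ 0 and inf{‖a − t·1‖ : t ∈ ℂ} ≤ r·L(a) for every a ∈ A, then ‖a‖ ≤ 2r·L(a) for every a ∈ A with μ(a) = 0; (ii) conversely, if k ≥ 0 and ‖a‖ ≤ k·L(a) for every a ∈ A with μ(a) = 0, then inf{‖a − t·1‖ : t ∈ ℂ} ≤ k·L(a) for every a ∈ A. -/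
/-!
Testing `μ` against `a - t • 1` gives `|t| ≤ ‖a - t • 1‖` whenever `μ a = 0`, so on the kernel of
the state the norm is at most twice the distance to the scalars. Conversely, `a - μ(a) • 1` lies
in the kernel of `μ`, its norm bounds the distance from `a` to the scalars, and its `L`-value is
at most `L a` because `L` vanishes on the scalars.
-/

section DistanceToScalars

variable {𝕜 E : Type*} [NontriviallyNormedField 𝕜] [SeminormedAddCommGroup E] [NormedSpace 𝕜 E]
  {μ : E →L[𝕜] 𝕜} {e a : E}

theorem norm_le_norm_sub_smul_of_apply_eq_zero (hμ : ‖μ‖ ≤ 1) (he : μ e = 1) (ha : μ a = 0)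
    (t : 𝕜) : ‖t‖ ≤ ‖a - t • e‖ :=
  calc ‖t‖ = ‖μ (a - t • e)‖ := by simp [ha, he]
    _ ≤ ‖μ‖ * ‖a - t • e‖ := μ.le_opNorm _
    _ ≤ ‖a - t • e‖ := mul_le_of_le_one_left (norm_nonneg _) hμ

theorem norm_le_two_mul_iInf_norm_sub_smul (hμ : ‖μ‖ ≤ 1) (he : μ e = 1) (he₁ : ‖e‖ ≤ 1)
    (ha : μ a = 0) : ‖a‖ ≤ 2 * ⨅ t : 𝕜, ‖a - t • e‖ := by
  have hle (t : 𝕜) : ‖a‖ / 2 ≤ ‖a - t • e‖ := by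
    have ht := norm_le_norm_sub_smul_of_apply_eq_zero hμ he ha t
    have hte : ‖t • e‖ ≤ ‖t‖ := by
      simpa [norm_smul] using mul_le_of_le_one_right (norm_nonneg t) he₁
    linarith [norm_le_norm_sub_add a (t • e)]
  linarith [le_ciInf hle]

theorem iInf_norm_sub_smul_le (a : E) (c : 𝕜) : ⨅ t : 𝕜, ‖a - t • e‖ ≤ ‖a - c • e‖ :=
  ciInf_le ⟨0, by rintro _ ⟨t, rfl⟩; exact norm_nonneg _⟩ c

theorem Seminorm.map_sub_smul_le_of_map_eq_zero (L : Seminorm 𝕜 E) (he : L e = 0) (c : 𝕜) :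
    L (a - c • e) ≤ L a := by
  simpa [map_smul_eq_mul, he] using map_sub_le_add L a (c • e)

end DistanceToScalars

theorem stmt0_general (A : Type*) [NormedRing A] [StarRing A] [CStarRing A]
    [NormedAlgebra ℂ A]
    (L : Seminorm ℂ A) (hL1 : L 1 = 0)
    (μ : A →L[ℂ] ℂ) (hμnorm : ‖μ‖ = 1) (hμ1 : μ 1 = 1) :
    (∀ r : ℝ, 0 ≤ r →
      (∀ a : A, sInf (Set.range fun t : ℂ => ‖a - t • (1 : A)‖) ≤ r * L a) →
      ∀ a : A, μ a = 0 → ‖a‖ ≤ 2 * r * L a) ∧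
    (∀ k : ℝ, 0 ≤ k →
      (∀ a : A, μ a = 0 → ‖a‖ ≤ k * L a) →
      ∀ a : A, sInf (Set.range fun t : ℂ => ‖a - t • (1 : A)‖) ≤ k * L a) := by
  have : Nontrivial A := nontrivial_of_ne 1 0 fun h => by simp [h] at hμ1
  refine ⟨fun r _ hinf a ha => ?_, fun k hk hker a => ?_⟩
  · have := norm_le_two_mul_iInf_norm_sub_smul hμnorm.le hμ1 CStarRing.norm_one.le ha
    have hinf_a : (⨅ t : ℂ, ‖a - t • (1 : A)‖) ≤ r * L a := hinf a
    linarith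
  · have hker' : μ (a - μ a • 1) = 0 := by simp [hμ1]
    calc sInf (Set.range fun t : ℂ => ‖a - t • (1 : A)‖) ≤ ‖a - μ a • 1‖ :=
          iInf_norm_sub_smul_le a (μ a)
      _ ≤ k * L (a - μ a • 1) := hker _ hker'
      _ ≤ k * L a := mul_le_mul_of_nonneg_left (L.map_sub_smul_le_of_map_eq_zero hL1 _) hk

/-- Proposition 2.4 of Rieffel, "Group C*-algebras as compact quantum metric spaces":
relation between the quotient norm modulo scalars being controlled by a seminorm `L`
and the norm bound `‖a‖ ≤ k·L a` on the kernel of a state `μ`. -/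
theorem stmt0 (A : Type*) [NormedRing A] [StarRing A] [CStarRing A]
    [NormedAlgebra ℂ A] [StarModule ℂ A]
    (L : Seminorm ℂ A) (hL1 : L 1 = 0)
    (μ : A →L[ℂ] ℂ) (hμnorm : ‖μ‖ = 1) (hμ1 : μ 1 = 1) :
    (∀ r : ℝ, 0 ≤ r →
      (∀ a : A, sInf (Set.range fun t : ℂ => ‖a - t • (1 : A)‖) ≤ r * L a) →
      ∀ a : A, μ a = 0 → ‖a‖ ≤ 2 * r * L a) ∧
    (∀ k : ℝ, 0 ≤ k →
      (∀ a : A, μ a = 0 → ‖a‖ ≤ k * L a) →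
      ∀ a : A, sInf (Set.range fun t : ℂ => ‖a - t • (1 : A)‖) ≤ k * L a) :=
  stmt0_general A L hL1 μ hμnorm hμ1
end

section
/- Let (X,ρ) be a metric space, T ⊆ [0,∞) an unbounded subset containing 0, and γ : T → X. Then: (i) if γ is an almost-geodesic ray, it is a weakly-geodesic ray; (ii) if γ is a weakly-geodesic ray, then for every y ∈ X the limit of φ_y(γ(t)) = ρ(γ(t),γ(0)) − ρ(γ(t),y) as t → ∞ along T exists; (iii) if γ is a geodesic ray, then for every y ∈ X the function t ↦ φ_y(γ(t)) is non-decreasing on T and bounded above by ρ(y,γ(0)). -/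
/-- `γ : T → X` is a geodesic ray: `ρ(γ(t),γ(s)) = |t − s|` for all `t, s ∈ T`. -/
def IsGeodesicRay {X : Type*} [MetricSpace X] (T : Set ℝ) (γ : ℝ → X) : Prop :=
  ∀ t ∈ T, ∀ s ∈ T, dist (γ t) (γ s) = |t - s|

/-- `γ : T → X` is an almost-geodesic ray: for every `ε > 0` there is `N` such that
for `t ≥ s ≥ N` in `T`, `|ρ(γ(t),γ(s)) + ρ(γ(s),γ(0)) − t| < ε`. -/
def IsAlmostGeodesicRay {X : Type*} [MetricSpace X] (T : Set ℝ) (γ : ℝ → X) : Prop :=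
  ∀ ε : ℝ, 0 < ε → ∃ N : ℝ, ∀ t ∈ T, ∀ s ∈ T, N ≤ s → s ≤ t →
    |dist (γ t) (γ s) + dist (γ s) (γ 0) - t| < ε

/-- `γ : T → X` is a weakly-geodesic ray: for every `y ∈ X` and `ε > 0` there is `N`
such that for all `s, t ∈ T` with `s, t ≥ N`, `|ρ(γ(t),γ(0)) − t| < ε` and
`|ρ(γ(t),y) − ρ(γ(s),y) − (t − s)| < ε`. -/
def IsWeaklyGeodesicRay {X : Type*} [MetricSpace X] (T : Set ℝ) (γ : ℝ → X) : Prop :=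
  ∀ y : X, ∀ ε : ℝ, 0 < ε → ∃ N : ℝ, ∀ t ∈ T, ∀ s ∈ T, N ≤ t → N ≤ s →
    |dist (γ t) (γ 0) - t| < ε ∧
    |dist (γ t) y - dist (γ s) y - (t - s)| < ε

/-!
Write `φ(t) = ρ(γ t, γ 0) − ρ(γ t, y)`. For all `s, t`,
`φ(t) − φ(s) = (ρ(γ t, γ 0) − t) − (ρ(γ s, γ 0) − s) − (ρ(γ t, y) − ρ(γ s, y) − (t − s))`,
so along a ray with `ρ(γ t, γ 0) − t → 0` the Cauchy property of `φ` at infinity is equivalent to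
the second clause of weak geodesicity. Along a weakly-geodesic ray this makes `φ` converge, by
completeness of `ℝ`. Along an almost-geodesic ray, the triangle inequality through `γ s` shows
that `φ` is nondecreasing up to an error vanishing at infinity; being bounded by `ρ(y, γ 0)`,
it eventually stays just below its supremum, hence is Cauchy. For a geodesic ray the error is `0`.
-/

open Filter

section CauchyAlong

variable {T : Set ℝ}

theorem neBot_atTop_inf_principal (hT : ∀ M : ℝ, ∃ t ∈ T, M < t) : NeBot (atTop ⊓ 𝓟 T) := by
  refine inf_principal_neBot_iff.mpr fun U hU => ?_
  obtain ⟨a, ha⟩ := mem_atTop_sets.mp hU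
  obtain ⟨t, htT, hat⟩ := hT a
  exact ⟨t, ha t hat.le, htT⟩

theorem cauchy_map_atTop_inf_principal {β : Type*} [PseudoMetricSpace β]
    (hT : ∀ M : ℝ, ∃ t ∈ T, M < t) {ψ : ℝ → β}
    (hψ : ∀ ε : ℝ, 0 < ε → ∃ N : ℝ, ∀ t ∈ T, ∀ s ∈ T, N ≤ t → N ≤ s → dist (ψ t) (ψ s) < ε) :
    Cauchy (map ψ (atTop ⊓ 𝓟 T)) := by
  have := neBot_atTop_inf_principal hT
  refine Metric.cauchy_iff.mpr ⟨inferInstance, fun ε hε => ?_⟩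
  obtain ⟨N, hN⟩ := hψ ε hε
  refine ⟨ψ '' (Set.Ici N ∩ T),
    image_mem_map (inter_mem_inf (Ici_mem_atTop N) (mem_principal_self T)), ?_⟩
  rintro _ ⟨t, ⟨hNt, htT⟩, rfl⟩ _ ⟨s, ⟨hNs, hsT⟩, rfl⟩
  exact hN t htT s hsT hNt hNs

theorem exists_tendsto_atTop_inf_principal {β : Type*} [PseudoMetricSpace β] [CompleteSpace β]
    (hT : ∀ M : ℝ, ∃ t ∈ T, M < t) {ψ : ℝ → β}
    (hψ : ∀ ε : ℝ, 0 < ε → ∃ N : ℝ, ∀ t ∈ T, ∀ s ∈ T, N ≤ t → N ≤ s → dist (ψ t) (ψ s) < ε) :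
    ∃ l : β, Tendsto ψ (atTop ⊓ 𝓟 T) (nhds l) :=
  CompleteSpace.complete (cauchy_map_atTop_inf_principal hT hψ)

theorem cauchy_of_bddAbove_of_almost_monotone (hT : ∀ M : ℝ, ∃ t ∈ T, M < t) {ψ : ℝ → ℝ}
    {B : ℝ} (hB : ∀ t ∈ T, ψ t ≤ B)
    (hψ : ∀ ε : ℝ, 0 < ε → ∃ N : ℝ, ∀ s ∈ T, ∀ t ∈ T, N ≤ s → s ≤ t → ψ s - ε ≤ ψ t) :
    ∀ ε : ℝ, 0 < ε → ∃ N : ℝ, ∀ t ∈ T, ∀ s ∈ T, N ≤ t → N ≤ s → |ψ t - ψ s| < ε := by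
  intro ε hε
  obtain ⟨N, hN⟩ := hψ (ε / 2) (half_pos hε)
  set S := ψ '' (T ∩ Set.Ici N)
  have hS : S.Nonempty := by
    obtain ⟨t, htT, hNt⟩ := hT N
    exact ⟨ψ t, t, ⟨htT, hNt.le⟩, rfl⟩
  have hSB : BddAbove S := ⟨B, by rintro _ ⟨t, ⟨htT, -⟩, rfl⟩; exact hB t htT⟩
  obtain ⟨_, ⟨t₀, ⟨ht₀T, hNt₀⟩, rfl⟩, ht₀⟩ :=
    exists_lt_of_lt_csSup hS (sub_lt_self (sSup S) (half_pos hε))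
  have hclose : ∀ t ∈ T, t₀ ≤ t → sSup S - ε < ψ t ∧ ψ t ≤ sSup S := fun t htT ht₀t =>
    ⟨by linarith [hN t₀ ht₀T t htT hNt₀ ht₀t], le_csSup hSB ⟨t, ⟨htT, hNt₀.trans ht₀t⟩, rfl⟩⟩
  refine ⟨t₀, fun t htT s hsT ht₀t ht₀s => abs_sub_lt_iff.mpr ?_⟩
  have := hclose t htT ht₀t
  have := hclose s hsT ht₀s
  constructor <;> linarith

end CauchyAlong

section Rays

variable {X : Type*} [MetricSpace X] {T : Set ℝ} {γ : ℝ → X}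

theorem dist_sub_dist_le_dist (x y z : X) : dist x z - dist x y ≤ dist y z := by
  linarith [dist_triangle x y z]

namespace IsAlmostGeodesicRay

theorem abs_dist_zero_sub_lt (hγ : IsAlmostGeodesicRay T γ) :
    ∀ ε : ℝ, 0 < ε → ∃ N : ℝ, ∀ t ∈ T, N ≤ t → |dist (γ t) (γ 0) - t| < ε := by
  intro ε hε
  obtain ⟨N, hN⟩ := hγ ε hε
  exact ⟨N, fun t htT hNt => by simpa using hN t htT t htT hNt le_rfl⟩

theorem almost_monotone (hγ : IsAlmostGeodesicRay T γ) (y : X) :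
    ∀ ε : ℝ, 0 < ε → ∃ N : ℝ, ∀ s ∈ T, ∀ t ∈ T, N ≤ s → s ≤ t →
      dist (γ s) (γ 0) - dist (γ s) y - ε ≤ dist (γ t) (γ 0) - dist (γ t) y := by
  intro ε hε
  obtain ⟨N, hN⟩ := hγ (ε / 2) (half_pos hε)
  refine ⟨N, fun s hsT t htT hNs hst => ?_⟩
  have hts := abs_lt.mp (hN t htT s hsT hNs hst)
  have ht := abs_lt.mp (by simpa using hN t htT t htT (hNs.trans hst) le_rfl)
  linarith [dist_triangle (γ t) (γ s) y]

theorem isWeaklyGeodesicRay (hT : ∀ M : ℝ, ∃ t ∈ T, M < t) (hγ : IsAlmostGeodesicRay T γ) :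
    IsWeaklyGeodesicRay T γ := by
  intro y ε hε
  have hφ := cauchy_of_bddAbove_of_almost_monotone hT
    (fun t _ => dist_sub_dist_le_dist (γ t) y (γ 0)) (hγ.almost_monotone y)
  obtain ⟨N₁, hN₁⟩ := hγ.abs_dist_zero_sub_lt (ε / 3) (by positivity)
  obtain ⟨N₂, hN₂⟩ := hφ (ε / 3) (by positivity)
  refine ⟨max N₁ N₂, fun t htT s hsT hNt hNs => ⟨?_, ?_⟩⟩
  · exact (hN₁ t htT (le_of_max_le_left hNt)).trans (by linarith)
  · have ht := abs_lt.mp (hN₁ t htT (le_of_max_le_left hNt))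
    have hs := abs_lt.mp (hN₁ s hsT (le_of_max_le_left hNs))
    have hts := abs_lt.mp (hN₂ t htT s hsT (le_of_max_le_right hNt) (le_of_max_le_right hNs))
    exact abs_lt.mpr ⟨by linarith, by linarith⟩

end IsAlmostGeodesicRay

theorem IsWeaklyGeodesicRay.exists_tendsto (hT : ∀ M : ℝ, ∃ t ∈ T, M < t)
    (hγ : IsWeaklyGeodesicRay T γ) (y : X) :
    ∃ l : ℝ, Tendsto (fun t => dist (γ t) (γ 0) - dist (γ t) y) (atTop ⊓ 𝓟 T) (nhds l) := by
  refine exists_tendsto_atTop_inf_principal hT fun ε hε => ?_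
  obtain ⟨N, hN⟩ := hγ y (ε / 3) (by positivity)
  refine ⟨N, fun t htT s hsT hNt hNs => ?_⟩
  obtain ⟨ht, hts⟩ := hN t htT s hsT hNt hNs
  obtain ⟨hs, -⟩ := hN s hsT t htT hNs hNt
  rw [Real.dist_eq, abs_lt]
  constructor <;> linarith [abs_lt.mp ht, abs_lt.mp hs, abs_lt.mp hts]

namespace IsGeodesicRay

theorem dist_zero (hT : T ⊆ Set.Ici 0) (hT0 : (0 : ℝ) ∈ T) (hγ : IsGeodesicRay T γ) {t : ℝ}
    (ht : t ∈ T) : dist (γ t) (γ 0) = t := by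
  rw [hγ t ht 0 hT0, sub_zero, abs_of_nonneg (hT ht)]

theorem monotoneOn (hT : T ⊆ Set.Ici 0) (hT0 : (0 : ℝ) ∈ T) (hγ : IsGeodesicRay T γ) (y : X) :
    MonotoneOn (fun t => dist (γ t) (γ 0) - dist (γ t) y) T := by
  intro s hs t ht hst
  have hts : dist (γ t) (γ s) = t - s := by rw [hγ t ht s hs, abs_of_nonneg (sub_nonneg.mpr hst)]
  linarith [hγ.dist_zero hT hT0 hs, hγ.dist_zero hT hT0 ht, dist_triangle (γ t) (γ s) y]

end IsGeodesicRay

end Rays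

/-- Lemma 4.5 of Rieffel: (i) almost-geodesic rays are weakly geodesic; (ii) for a
weakly-geodesic ray the limit of `φ_y(γ(t)) = ρ(γ(t),γ(0)) − ρ(γ(t),y)` as `t → ∞`
along `T` exists; (iii) for a geodesic ray, `t ↦ φ_y(γ(t))` is non-decreasing on `T`
and bounded above by `ρ(y,γ(0))`. -/
theorem stmt5 {X : Type*} [MetricSpace X] (T : Set ℝ)
    (hT : T ⊆ Set.Ici (0 : ℝ)) (hT0 : (0 : ℝ) ∈ T)
    (hTunbdd : ∀ M : ℝ, ∃ t ∈ T, M < t) (γ : ℝ → X) :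
    (IsAlmostGeodesicRay T γ → IsWeaklyGeodesicRay T γ) ∧
    (IsWeaklyGeodesicRay T γ → ∀ y : X, ∃ l : ℝ,
      Filter.Tendsto (fun t : ℝ => dist (γ t) (γ 0) - dist (γ t) y)
        (Filter.atTop ⊓ Filter.principal T) (nhds l)) ∧
    (IsGeodesicRay T γ → ∀ y : X,
      (∀ s ∈ T, ∀ t ∈ T, s ≤ t →
        dist (γ s) (γ 0) - dist (γ s) y ≤ dist (γ t) (γ 0) - dist (γ t) y) ∧
      (∀ t ∈ T, dist (γ t) (γ 0) - dist (γ t) y ≤ dist y (γ 0))) :=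
  ⟨IsAlmostGeodesicRay.isWeaklyGeodesicRay hTunbdd, IsWeaklyGeodesicRay.exists_tendsto hTunbdd,
    fun hγ y => ⟨hγ.monotoneOn hT hT0 y, fun t _ => dist_sub_dist_le_dist (γ t) y (γ 0)⟩⟩
end

section
/- Let (X,ρ) be a metric space, and let γ : T → X and γ′ : T′ → X be almost-geodesic rays with the same initial point z₀ = γ(0) = γ′(0). Suppose that for every N and every ε > 0 there exist s ∈ T and t ∈ T′ with s, t ≥ N and ρ(γ(s),γ′(t)) < ε. Then for every y ∈ X, the limits lim_{s→∞}(ρ(γ(s),z₀) − ρ(γ(s),y)) and lim_{t→∞}(ρ(γ′(t),z₀) − ρ(γ′(t),y)) exist and are equal (that is, γ and γ′ determine the same Busemann point of the metric boundary). -/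
/-!
Along an almost-geodesic ray `γ`, the function `s ↦ φ_y(γ s)` is bounded by `ρ(z₀, y)` and
nondecreasing up to an error that tends to `0`, so it converges. Since `φ_y` is
`2`-Lipschitz, the limits along two rays that come arbitrarily close at arbitrarily late times
coincide.
-/

open Filter Topology

theorem exists_tendsto_of_forall_eventually_sub_le {α : Type*} {F : Filter α} {f : α → ℝ}
    (hle : F.IsBoundedUnder (· ≤ ·) f) (hge : F.IsBoundedUnder (· ≥ ·) f)
    (hf : ∀ ε > 0, ∀ᶠ s in F, ∀ᶠ t in F, f s - ε ≤ f t) :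
    ∃ l, Tendsto f F (𝓝 l) := by
  rcases F.eq_or_neBot with rfl | hF
  · exact ⟨0, tendsto_bot⟩
  refine ⟨limsup f F,
    tendsto_order.2 ⟨fun a ha => ?_, fun b hb => eventually_lt_of_limsup_lt hb hle⟩⟩
  have hfreq : ∃ᶠ s in F, (a + limsup f F) / 2 < f s :=
    frequently_lt_of_lt_limsup hge.isCoboundedUnder_le (by linarith)
  obtain ⟨s, hs, hst⟩ :=
    (hfreq.and_eventually (hf ((limsup f F - a) / 2) (by linarith))).exists
  exact hst.mono fun t ht => by linarith

theorem frequently_prod_atTop_inf_principal {α : Type*} [SemilatticeSup α] [Nonempty α]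
    {T T' : Set α} {p : α → α → Prop} (h : ∀ N, ∃ s ∈ T, ∃ t ∈ T', N ≤ s ∧ N ≤ t ∧ p s t) :
    ∃ᶠ q in (atTop ⊓ 𝓟 T) ×ˢ (atTop ⊓ 𝓟 T'), p q.1 q.2 := by
  rw [← prod_inf_prod, prod_principal_principal, prod_atTop_atTop_eq, frequently_inf_principal,
    frequently_atTop]
  rintro ⟨N, N'⟩
  obtain ⟨s, hs, t, ht, hNs, hNt, hst⟩ := h (N ⊔ N')
  exact ⟨(s, t), ⟨le_sup_left.trans hNs, le_sup_right.trans hNt⟩, ⟨hs, ht⟩, hst⟩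

theorem eq_of_tendsto_of_frequently_dist_lt {α β M : Type*} [MetricSpace M] {F : Filter α}
    {G : Filter β} {f : α → M} {g : β → M} {a b : M} (hf : Tendsto f F (𝓝 a))
    (hg : Tendsto g G (𝓝 b)) (h : ∀ ε > 0, ∃ᶠ q in F ×ˢ G, dist (f q.1) (g q.2) < ε) :
    a = b := by
  have hdist : Tendsto (fun q : α × β => dist (f q.1) (g q.2)) (F ×ˢ G) (𝓝 (dist a b)) :=
    (hf.comp tendsto_fst).dist (hg.comp tendsto_snd)
  exact eq_of_forall_dist_le fun ε hε =>
    le_of_tendsto_of_frequently hdist ((h ε hε).mono fun _ => le_of_lt)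

section Busemann

variable {X : Type*} [PseudoMetricSpace X]

theorem abs_dist_sub_dist_le (z y x : X) : |dist x z - dist x y| ≤ dist z y := by
  simpa only [Real.dist_eq] using dist_dist_dist_le_right x z y

theorem dist_dist_sub_dist_le (z y x x' : X) :
    dist (dist x z - dist x y) (dist x' z - dist x' y) ≤ 2 * dist x x' :=
  calc _ ≤ dist (dist x z) (dist x' z) + dist (dist x y) (dist x' y) := dist_sub_sub_le _ _ _ _
    _ ≤ dist x x' + dist x x' :=
      add_le_add (dist_dist_dist_le_left _ _ _) (dist_dist_dist_le_left _ _ _)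
    _ = 2 * dist x x' := by ring

end Busemann

namespace IsAlmostGeodesicRay

variable {X : Type*} [MetricSpace X] {T : Set ℝ} {γ : ℝ → X}

theorem eventually_busemann_sub_le (hγ : IsAlmostGeodesicRay T γ) (y : X) {ε : ℝ}
    (hε : 0 < ε) :
    ∀ᶠ s in atTop ⊓ 𝓟 T, ∀ᶠ t in atTop ⊓ 𝓟 T,
      dist (γ s) (γ 0) - dist (γ s) y - ε ≤ dist (γ t) (γ 0) - dist (γ t) y := by
  obtain ⟨N, hN⟩ := hγ (ε / 2) (half_pos hε)
  rw [eventually_inf_principal]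
  filter_upwards [eventually_ge_atTop N] with s hNs hs
  rw [eventually_inf_principal]
  filter_upwards [eventually_ge_atTop s] with t hst ht
  -- both `ρ(γ t, γ s) + ρ(γ s, γ 0)` and `ρ(γ t, γ 0)` are within `ε / 2` of `t`
  have hts := abs_lt.1 (hN t ht s hs hNs hst)
  have htt := abs_lt.1 (hN t ht t ht (hNs.trans hst) le_rfl)
  rw [dist_self, zero_add] at htt
  linarith [hts.1, htt.2, dist_triangle (γ t) (γ s) y]

theorem exists_tendsto_busemann (hγ : IsAlmostGeodesicRay T γ) (y : X) :
    ∃ l, Tendsto (fun s => dist (γ s) (γ 0) - dist (γ s) y) (atTop ⊓ 𝓟 T) (𝓝 l) :=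
  exists_tendsto_of_forall_eventually_sub_le
    (isBoundedUnder_of
      ⟨dist (γ 0) y, fun _ => (le_abs_self _).trans (abs_dist_sub_dist_le _ _ _)⟩)
    (isBoundedUnder_of ⟨-dist (γ 0) y, fun _ => neg_le_of_abs_le (abs_dist_sub_dist_le _ _ _)⟩)
    fun _ => hγ.eventually_busemann_sub_le y

end IsAlmostGeodesicRay

theorem stmt6_general {X : Type*} [MetricSpace X] (T T' : Set ℝ)
    (γ γ' : ℝ → X)
    (hγ : IsAlmostGeodesicRay T γ) (hγ' : IsAlmostGeodesicRay T' γ')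
    (hbase : γ 0 = γ' 0)
    (hclose : ∀ N : ℝ, ∀ ε : ℝ, 0 < ε → ∃ s ∈ T, ∃ t ∈ T', N ≤ s ∧ N ≤ t ∧
      dist (γ s) (γ' t) < ε) :
    ∀ y : X, ∃ l : ℝ,
      Filter.Tendsto (fun s : ℝ => dist (γ s) (γ 0) - dist (γ s) y)
        (Filter.atTop ⊓ Filter.principal T) (nhds l) ∧
      Filter.Tendsto (fun t : ℝ => dist (γ' t) (γ' 0) - dist (γ' t) y)
        (Filter.atTop ⊓ Filter.principal T') (nhds l) := by
  intro y
  obtain ⟨l, hl⟩ := hγ.exists_tendsto_busemann y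
  obtain ⟨l', hl'⟩ := hγ'.exists_tendsto_busemann y
  rw [← hbase] at hl' ⊢
  suffices l = l' from ⟨l, hl, this ▸ hl'⟩
  refine eq_of_tendsto_of_frequently_dist_lt hl hl' fun ε hε => ?_
  refine (frequently_prod_atTop_inf_principal fun N => hclose N (ε / 2) (half_pos hε)).mono
    fun q hq => ?_
  calc _ ≤ 2 * dist (γ q.1) (γ' q.2) := dist_dist_sub_dist_le _ _ _ _
    _ < ε := by linarith

/-- Proposition 4.9 of Rieffel: two almost-geodesic rays from the same base point which
come arbitrarily close at arbitrarily late times determine the same Busemann point, i.e.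
the limits `lim φ_y(γ(s))` and `lim φ_y(γ′(t))` exist and agree for every `y`. -/
theorem stmt6 {X : Type*} [MetricSpace X] (T T' : Set ℝ)
    (hT : T ⊆ Set.Ici (0 : ℝ)) (hT0 : (0 : ℝ) ∈ T)
    (hTunbdd : ∀ M : ℝ, ∃ t ∈ T, M < t)
    (hT' : T' ⊆ Set.Ici (0 : ℝ)) (hT'0 : (0 : ℝ) ∈ T')
    (hT'unbdd : ∀ M : ℝ, ∃ t ∈ T', M < t)
    (γ γ' : ℝ → X)
    (hγ : IsAlmostGeodesicRay T γ) (hγ' : IsAlmostGeodesicRay T' γ')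
    (hbase : γ 0 = γ' 0)
    (hclose : ∀ N : ℝ, ∀ ε : ℝ, 0 < ε → ∃ s ∈ T, ∃ t ∈ T', N ≤ s ∧ N ≤ t ∧
      dist (γ s) (γ' t) < ε) :
    ∀ y : X, ∃ l : ℝ,
      Filter.Tendsto (fun s : ℝ => dist (γ s) (γ 0) - dist (γ s) y)
        (Filter.atTop ⊓ Filter.principal T) (nhds l) ∧
      Filter.Tendsto (fun t : ℝ => dist (γ' t) (γ' 0) - dist (γ' t) y)
        (Filter.atTop ⊓ Filter.principal T') (nhds l) :=
  stmt6_general T T' γ γ' hγ hγ' hbase hclose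
end

section
/- Let ω : ℤ → ℝ be translation-bounded with ω(0) = 0, and suppose there exist β with 1/2 < β ≤ 1 and a constant B > 0 such that |n|^β ≤ B·|ω(n)| for all n ≠ 0. Then the set { f̂ : f : ℤ → ℂ finitely supported, f(0) = 0, ‖[M_ω, π_f]‖ ≤ 1 } is totally bounded in the supremum norm on continuous functions on ℝ/ℤ. (Since ‖π_f‖ equals the supremum norm of f̂, this expresses that L_ω(f) = ‖[M_ω,π_f]‖ is a Lip-norm on C*(ℤ) ≅ C(𝕋).) -/
/-!
Applying `[M_ω, π_f]` to the unit vector `δ₀` gives `m ↦ f(m) ω(m)` (because `ω 0 = 0`), so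
`‖[M_ω, π_f]‖ ≤ 1` forces `∑ₘ |f(m)|² |ω(m)|² ≤ 1`. The growth condition makes `∑ₙ |ω(n)|⁻²`
converge (compare with `∑ |n|^(-2β)`, `2β > 1`), so by Cauchy–Schwarz the `ℓ¹` tails
`∑_{n ∉ s} |f(n)|` are small uniformly in `f`. Hence, up to `ε`, every `f̂` is a trigonometric
polynomial with frequencies in one fixed finite set and bounded coefficients, and these form a
compact set.
-/

open scoped Real

theorem Metric.totallyBounded_of_forall_subset_thickening {α : Type*} [PseudoMetricSpace α]
    {s : Set α} (h : ∀ ε > 0, ∃ K, TotallyBounded K ∧ s ⊆ Metric.thickening ε K) :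
    TotallyBounded s := by
  refine Metric.totallyBounded_iff.2 fun ε hε => ?_
  obtain ⟨K, hK, hsK⟩ := h (ε / 2) (half_pos hε)
  obtain ⟨t, ht, hKt⟩ := Metric.totallyBounded_iff.1 hK (ε / 2) (half_pos hε)
  refine ⟨t, ht, fun x hx => ?_⟩
  obtain ⟨z, hz, hxz⟩ := Metric.mem_thickening_iff.1 (hsK hx)
  obtain ⟨y, hy, hzy⟩ := Set.mem_iUnion₂.1 (hKt hz)
  rw [Metric.mem_ball] at hzy
  exact Set.mem_iUnion₂.2 ⟨y, hy, Metric.mem_ball.2 (by linarith [dist_triangle x z y])⟩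

section FiniteSums

variable {ι 𝕜 E : Type*} [NormedField 𝕜] [NormedAddCommGroup E] [NormedSpace 𝕜 E]

theorem norm_sum_smul_le_sum_norm {e : ι → E} (he : ∀ i, ‖e i‖ ≤ 1) (f : ι → 𝕜) (t : Finset ι) :
    ‖∑ i ∈ t, f i • e i‖ ≤ ∑ i ∈ t, ‖f i‖ :=
  (norm_sum_le _ _).trans <| Finset.sum_le_sum fun i _ => by
    rw [norm_smul]; exact mul_le_of_le_one_right (norm_nonneg _) (he i)

/-- Up to `ε`, all these sums are sums over one fixed finite set of indices. -/
theorem totallyBounded_finsetSums_of_uniform_tail [ProperSpace 𝕜] {e : ι → E}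
    (he : ∀ i, ‖e i‖ ≤ 1) {A : Set (ι → 𝕜)} {R : ℝ} (hbdd : ∀ f ∈ A, ∀ i, ‖f i‖ ≤ R)
    (htail : ∀ ε > 0, ∃ s : Finset ι, ∀ f ∈ A, ∀ t : Finset ι, Disjoint s t →
      ∑ i ∈ t, ‖f i‖ < ε) :
    TotallyBounded {g | ∃ f ∈ A, ∃ F : Finset ι, g = ∑ i ∈ F, f i • e i} := by
  classical
  refine Metric.totallyBounded_of_forall_subset_thickening fun ε hε => ?_
  obtain ⟨s, hs⟩ := htail ε hε
  have hcont : Continuous fun c : s → 𝕜 => ∑ i, c i • e i := by fun_prop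
  have hK := isCompact_univ_pi fun _ : s => isCompact_closedBall (0 : 𝕜) R
  refine ⟨_, (hK.image hcont).totallyBounded, ?_⟩
  rintro _ ⟨f, hf, F, rfl⟩
  refine Metric.mem_thickening_iff.2 ⟨_, ⟨fun i => if (i : ι) ∈ F then f i else 0,
    fun i _ => ?_, rfl⟩, ?_⟩
  · simp only [mem_closedBall_zero_iff]
    split_ifs
    · exact hbdd f hf i
    · simpa using (norm_nonneg _).trans (hbdd f hf i)
  · have htrunc : ∑ i : s, (if (i : ι) ∈ F then f i else 0) • e i =
        ∑ i ∈ F with i ∈ s, f i • e i := by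
      rw [Finset.sum_coe_sort s (fun i => (if i ∈ F then f i else 0) • e i)]
      simp only [ite_smul, zero_smul, Finset.sum_ite_mem, Finset.filter_mem_eq_inter,
        Finset.inter_comm]
    dsimp only
    rw [htrunc, dist_eq_norm, ← Finset.sum_filter_add_sum_filter_not F (· ∈ s),
      add_sub_cancel_left]
    exact (norm_sum_smul_le_sum_norm he f _).trans_lt <|
      hs f hf _ (Finset.disjoint_right.2 fun _ hi => (Finset.mem_filter.1 hi).2)

end FiniteSums

section WeightedUnitBall

variable {ι V : Type*} [SeminormedAddCommGroup V]

/-- `f` has to vanish where `w` does, so that `‖f i‖ = ‖f i‖ * |w i| * |w i|⁻¹` holds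
also where `|w i|⁻¹ = 0⁻¹ = 0`. -/
def weightedUnitBall (w : ι → ℝ) : Set (ι → V) :=
  {f | (∀ i, w i = 0 → f i = 0) ∧ ∀ s : Finset ι, ∑ i ∈ s, (‖f i‖ * |w i|) ^ 2 ≤ 1}

/-- Cauchy–Schwarz against the weights `|w i|⁻¹`. -/
theorem sum_norm_le_sqrt_of_mem_weightedUnitBall {w : ι → ℝ} {f : ι → V}
    (hf : f ∈ weightedUnitBall w) (t : Finset ι) :
    ∑ i ∈ t, ‖f i‖ ≤ √(∑ i ∈ t, (|w i|⁻¹) ^ 2) := by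
  have hsplit : ∀ i, ‖f i‖ = ‖f i‖ * |w i| * |w i|⁻¹ := fun i => by
    by_cases h : w i = 0
    · simp [hf.1 i h]
    · rw [mul_assoc, mul_inv_cancel₀ (abs_ne_zero.2 h), mul_one]
  rw [Real.le_sqrt (by positivity) (by positivity)]
  calc (∑ i ∈ t, ‖f i‖) ^ 2 = (∑ i ∈ t, ‖f i‖ * |w i| * |w i|⁻¹) ^ 2 := by
        rw [Finset.sum_congr rfl fun i _ => hsplit i]
    _ ≤ (∑ i ∈ t, (‖f i‖ * |w i|) ^ 2) * ∑ i ∈ t, (|w i|⁻¹) ^ 2 :=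
        Finset.sum_mul_sq_le_sq_mul_sq _ _ _
    _ ≤ ∑ i ∈ t, (|w i|⁻¹) ^ 2 := mul_le_of_le_one_left (by positivity) (hf.2 t)

theorem totallyBounded_finsetSums_weightedUnitBall {𝕜 E : Type*} [NormedField 𝕜] [ProperSpace 𝕜]
    [NormedAddCommGroup E] [NormedSpace 𝕜 E] {e : ι → E} (he : ∀ i, ‖e i‖ ≤ 1) {w : ι → ℝ}
    (hw : Summable fun i => (|w i|⁻¹) ^ 2) :
    TotallyBounded {g | ∃ f ∈ (weightedUnitBall w : Set (ι → 𝕜)), ∃ F : Finset ι,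
      g = ∑ i ∈ F, f i • e i} := by
  refine totallyBounded_finsetSums_of_uniform_tail he (R := √(∑' i, (|w i|⁻¹) ^ 2))
    (fun f hf i => ?_) fun ε hε => ?_
  · simpa using (sum_norm_le_sqrt_of_mem_weightedUnitBall hf {i}).trans
      (Real.sqrt_le_sqrt (hw.sum_le_tsum {i} fun _ _ => by positivity))
  · obtain ⟨s, hs⟩ :=
      summable_iff_vanishing.1 hw (Set.Iio (ε ^ 2)) (Iio_mem_nhds (by positivity))
    exact ⟨s, fun f hf t hst => (sum_norm_le_sqrt_of_mem_weightedUnitBall hf t).trans_lt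
      ((Real.sqrt_lt' hε).2 (hs t hst.symm))⟩

end WeightedUnitBall

section Growth

variable {ω : ℤ → ℝ} {β B : ℝ}

theorem abs_pos_of_rpow_le_mul_abs (hgrowth : ∀ n : ℤ, n ≠ 0 → |(n : ℝ)| ^ β ≤ B * |ω n|)
    {n : ℤ} (hn : n ≠ 0) : 0 < |ω n| := by
  refine (abs_nonneg _).lt_of_ne fun h => ?_
  have := hgrowth n hn
  rw [← h, mul_zero] at this
  exact this.not_gt (by positivity)

theorem summable_inv_abs_sq_of_rpow_le_mul_abs (hβ : 1 / 2 < β)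
    (hgrowth : ∀ n : ℤ, n ≠ 0 → |(n : ℝ)| ^ β ≤ B * |ω n|) :
    Summable fun n : ℤ => (|ω n|⁻¹) ^ 2 := by
  refine .of_norm_bounded_eventually
    ((Real.summable_abs_int_rpow (b := 2 * β) (by linarith)).mul_left (B ^ 2)) ?_
  filter_upwards [(Set.finite_singleton (0 : ℤ)).compl_mem_cofinite] with n hn
  have hn0 : n ≠ 0 := hn
  have hω := abs_pos_of_rpow_le_mul_abs hgrowth hn0
  have hpos : 0 < |(n : ℝ)| ^ β := by positivity
  have hinv : |ω n|⁻¹ ≤ B * (|(n : ℝ)| ^ β)⁻¹ := by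
    rw [← div_eq_mul_inv, le_div_iff₀ hpos, inv_mul_le_iff₀ hω, mul_comm]
    exact hgrowth n hn0
  calc ‖(|ω n|⁻¹) ^ 2‖ = (|ω n|⁻¹) ^ 2 := Real.norm_of_nonneg (by positivity)
    _ ≤ (B * (|(n : ℝ)| ^ β)⁻¹) ^ 2 := pow_le_pow_left₀ (by positivity) hinv 2
    _ = B ^ 2 * |(n : ℝ)| ^ (-(2 * β)) := by
        rw [Real.rpow_neg (abs_nonneg _), mul_comm 2 β, Real.rpow_mul (abs_nonneg _),
          Real.rpow_two, mul_pow, inv_pow]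

end Growth

theorem lp.sum_norm_sq_le_norm_sq {α : Type*} {E : α → Type*} [∀ i, NormedAddCommGroup (E i)]
    (x : lp E 2) (s : Finset α) : ∑ i ∈ s, ‖x i‖ ^ 2 ≤ ‖x‖ ^ 2 := by
  simpa using lp.sum_rpow_le_norm_rpow (p := 2) (by norm_num) x s

section Commutator

variable {ω : ℤ → ℝ} {f : ℤ → ℂ} {D : lp (fun _ : ℤ => ℂ) 2 →L[ℂ] lp (fun _ : ℤ => ℂ) 2}

theorem commutator_apply_single_zero (hω0 : ω 0 = 0)
    (hD : ∀ (ξ : lp (fun _ : ℤ => ℂ) 2) (m : ℤ),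
      D ξ m = ∑ᶠ n : ℤ, f n * ((ω m - ω (m - n) : ℝ) : ℂ) * ξ (m - n)) (m : ℤ) :
    D (lp.single 2 0 1) m = f m * ω m := by
  rw [hD, finsum_eq_single _ m fun n hn => ?_]
  · simp [hω0]
  · rw [lp.single_apply_ne 2 0 1 (sub_ne_zero.2 hn.symm), mul_zero]

theorem mem_weightedUnitBall_of_commutator (hω0 : ω 0 = 0)
    (hD : ∀ (ξ : lp (fun _ : ℤ => ℂ) 2) (m : ℤ),
      D ξ m = ∑ᶠ n : ℤ, f n * ((ω m - ω (m - n) : ℝ) : ℂ) * ξ (m - n))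
    (hD1 : ‖D‖ ≤ 1) (hf : ∀ n, ω n = 0 → f n = 0) : f ∈ weightedUnitBall ω := by
  refine ⟨hf, fun s => ?_⟩
  set ξ : lp (fun _ : ℤ => ℂ) 2 := lp.single 2 0 1
  have hξ : ‖ξ‖ = 1 := by simp [ξ, lp.norm_single]
  calc ∑ m ∈ s, (‖f m‖ * |ω m|) ^ 2 = ∑ m ∈ s, ‖D ξ m‖ ^ 2 := by
        simp [ξ, commutator_apply_single_zero hω0 hD]
    _ ≤ ‖D ξ‖ ^ 2 := lp.sum_norm_sq_le_norm_sq _ _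
    _ ≤ 1 := pow_le_one₀ (norm_nonneg _) ((D.le_opNorm ξ).trans (by rwa [hξ, mul_one]))

end Commutator

theorem eq_sum_fourier_of_forall_apply_eq {g : C(UnitAddCircle, ℂ)} {f : ℤ → ℂ}
    (hf : f.support.Finite)
    (hg : ∀ x : ℝ, g x = ∑ᶠ n : ℤ, f n * Complex.exp (2 * π * Complex.I * n * x)) :
    g = ∑ n ∈ hf.toFinset, f n • fourier n := by
  ext x
  obtain ⟨r, rfl⟩ := QuotientAddGroup.mk_surjective x
  rw [hg, finsum_eq_sum_of_support_subset _ (s := hf.toFinset)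
    ((Function.support_mul_subset_left _ _).trans (by simp))]
  simp

theorem stmt7_general (ω : ℤ → ℝ) (hω0 : ω 0 = 0)
    (β B : ℝ) (hβ : 1 / 2 < β)
    (hgrowth : ∀ n : ℤ, n ≠ 0 → |(n : ℝ)| ^ β ≤ B * |ω n|) :
    TotallyBounded {g : C(UnitAddCircle, ℂ) |
      ∃ f : ℤ → ℂ, (Function.support f).Finite ∧ f 0 = 0 ∧
        (∃ D : lp (fun _ : ℤ => ℂ) 2 →L[ℂ] lp (fun _ : ℤ => ℂ) 2,
          (∀ (ξ : lp (fun _ : ℤ => ℂ) 2) (m : ℤ),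
            D ξ m = ∑ᶠ n : ℤ, f n * ((ω m - ω (m - n) : ℝ) : ℂ) * ξ (m - n)) ∧
          ‖D‖ ≤ 1) ∧
        (∀ x : ℝ, g (x : UnitAddCircle) =
          ∑ᶠ n : ℤ, f n * Complex.exp (2 * Real.pi * Complex.I * n * x))} := by
  refine (totallyBounded_finsetSums_weightedUnitBall (𝕜 := ℂ) (fun n => (fourier_norm n).le)
    (summable_inv_abs_sq_of_rpow_le_mul_abs hβ hgrowth)).subset ?_
  rintro g ⟨f, hfin, hf0, ⟨D, hD, hD1⟩, hg⟩
  have hf : ∀ n, ω n = 0 → f n = 0 := fun n hn => by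
    by_cases h : n = 0
    · rwa [h]
    · exact absurd hn (abs_pos.1 (abs_pos_of_rpow_le_mul_abs hgrowth h))
  exact ⟨f, mem_weightedUnitBall_of_commutator hω0 hD hD1 hf, hfin.toFinset,
    eq_sum_fourier_of_forall_apply_eq hfin hg⟩

/-- Theorem 5.3 of Rieffel: if `ω : ℤ → ℝ` is translation-bounded, `ω(0) = 0`, and
`|n|^β ≤ B·|ω(n)|` for some `1/2 < β ≤ 1`, then `L_ω(f) = ‖[M_ω, π_f]‖` is a Lip-norm
on `C*(ℤ) ≅ C(𝕋)`: the set of Fourier transforms `f̂` of finitely supported `f` with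
`f(0) = 0` and `‖[M_ω, π_f]‖ ≤ 1` is totally bounded in the supremum norm. -/
theorem stmt7 (ω : ℤ → ℝ) (hω0 : ω 0 = 0)
    (hωtb : ∀ n : ℤ, ∃ C : ℝ, ∀ m : ℤ, |ω m - ω (m - n)| ≤ C)
    (β B : ℝ) (hβ : 1 / 2 < β) (hβ1 : β ≤ 1) (hB : 0 < B)
    (hgrowth : ∀ n : ℤ, n ≠ 0 → |(n : ℝ)| ^ β ≤ B * |ω n|) :
    TotallyBounded {g : C(UnitAddCircle, ℂ) |
      ∃ f : ℤ → ℂ, (Function.support f).Finite ∧ f 0 = 0 ∧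
        (∃ D : lp (fun _ : ℤ => ℂ) 2 →L[ℂ] lp (fun _ : ℤ => ℂ) 2,
          (∀ (ξ : lp (fun _ : ℤ => ℂ) 2) (m : ℤ),
            D ξ m = ∑ᶠ n : ℤ, f n * ((ω m - ω (m - n) : ℝ) : ℂ) * ξ (m - n)) ∧
          ‖D‖ ≤ 1) ∧
        (∀ x : ℝ, g (x : UnitAddCircle) =
          ∑ᶠ n : ℤ, f n * Complex.exp (2 * Real.pi * Complex.I * n * x))} :=
  stmt7_general ω hω0 β B hβ hgrowth
end

section
/- Let V be a finite-dimensional real normed space and let v be a smooth point of the unit sphere of V, with support functional σ_v. Then for every y ∈ V, lim_{t→+∞} (‖t·v‖ − ‖t·v − y‖) = σ_v(y). -/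
/-!
Both bounds come from norming functionals. Since `σ` norms `t • v`, the triangle inequality gives
`‖t • v‖ - ‖t • v - y‖ ≤ σ y`. Conversely, if `τ_t` (of norm at most one) norms `t • v - y`, then
`τ_t y ≤ ‖t • v‖ - ‖t • v - y‖`, and `τ_t v ≥ 1 - 2‖y‖ / t`. Every cluster point of `τ_t` as
`t → ∞`, which exists by compactness of the dual unit ball, is therefore a support functional at `v`,
hence equals `σ` by smoothness; so `τ_t y → σ y` and the two bounds squeeze the difference.
-/

open Filter Topology

section NormingFunctional

variable {E : Type*} [SeminormedAddCommGroup E] [NormedSpace ℝ E] {f : StrongDual ℝ E}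

lemma apply_le_norm_of_norm_le_one (hf : ‖f‖ ≤ 1) (x : E) : f x ≤ ‖x‖ :=
  calc f x ≤ ‖f x‖ := Real.le_norm_self _
    _ ≤ 1 * ‖x‖ := f.le_of_opNorm_le hf x
    _ = ‖x‖ := one_mul _

lemma norm_sub_norm_sub_le_apply (hf : ‖f‖ ≤ 1) {x : E} (hfx : f x = ‖x‖) (y : E) :
    ‖x‖ - ‖x - y‖ ≤ f y := by
  have := apply_le_norm_of_norm_le_one hf (x - y)
  rw [map_sub, hfx] at this
  linarith

lemma apply_le_norm_sub_norm_sub (hf : ‖f‖ ≤ 1) {x y : E} (hfxy : f (x - y) = ‖x - y‖) :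
    f y ≤ ‖x‖ - ‖x - y‖ := by
  have := apply_le_norm_of_norm_le_one hf x
  rw [map_sub] at hfxy
  linarith

lemma tendsto_apply_of_apply_smul_sub_eq_norm {v y : E} (hv : ‖v‖ = 1) {τ : ℝ → StrongDual ℝ E}
    (hτ : ∀ t, ‖τ t‖ ≤ 1) (hτy : ∀ t, τ t (t • v - y) = ‖t • v - y‖) :
    Tendsto (fun t => τ t v) atTop (𝓝 1) := by
  have hlower : ∀ t : ℝ, 0 < t → 1 - 2 * ‖y‖ / t ≤ τ t v := by
    intro t ht
    have hfar : t - ‖y‖ ≤ ‖t • v - y‖ := by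
      simpa [norm_smul, hv, abs_of_pos ht] using norm_sub_norm_le (t • v) y
    have hy : τ t (-y) ≤ ‖-y‖ := apply_le_norm_of_norm_le_one (hτ t) (-y)
    have hτv : t - 2 * ‖y‖ ≤ t * τ t v := by
      have := hτy t
      simp only [map_sub, map_smul, smul_eq_mul, map_neg, norm_neg] at this hy
      linarith
    rw [sub_le_iff_le_add, ← sub_le_iff_le_add', le_div_iff₀ ht]
    linarith
  have hlim : Tendsto (fun t : ℝ => 1 - 2 * ‖y‖ / t) atTop (𝓝 1) := by
    simpa using (tendsto_const_nhds (x := (1 : ℝ))).sub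
      ((tendsto_const_nhds (x := 2 * ‖y‖)).div_atTop tendsto_id)
  refine tendsto_of_tendsto_of_tendsto_of_le_of_le' hlim tendsto_const_nhds ?_ ?_
  · filter_upwards [eventually_gt_atTop 0] with t ht using hlower t ht
  · exact Eventually.of_forall fun t => hv ▸ apply_le_norm_of_norm_le_one (hτ t) v

end NormingFunctional

theorem tendsto_of_tendsto_apply_of_smooth {V : Type*} [NormedAddCommGroup V] [NormedSpace ℝ V]
    [FiniteDimensional ℝ V] {v : V} (hv : ‖v‖ ≤ 1) {σ : StrongDual ℝ V}
    (huniq : ∀ τ : StrongDual ℝ V, ‖τ‖ = 1 → τ v = 1 → τ = σ)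
    {ι : Type*} {l : Filter ι} {τ : ι → StrongDual ℝ V} (hτ : ∀ i, ‖τ i‖ ≤ 1)
    (hτv : Tendsto (fun i => τ i v) l (𝓝 1)) : Tendsto τ l (𝓝 σ) := by
  refine (ProperSpace.isCompact_closedBall 0 1).tendsto_nhds_of_unique_mapClusterPt
    (Eventually.of_forall fun i => mem_closedBall_zero_iff.2 (hτ i)) fun L hL hcluster => ?_
  have hLv : L v = 1 := by
    have : MapClusterPt (L v) l (fun i => τ i v) :=
      hcluster.continuousAt_comp (ContinuousLinearMap.apply ℝ ℝ v).continuous.continuousAt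
    by_contra hne
    exact clusterPt_iff_not_disjoint.1 (this.clusterPt.mono hτv) (disjoint_nhds_nhds.2 hne)
  refine huniq L (le_antisymm (mem_closedBall_zero_iff.1 hL) ?_) hLv
  calc (1 : ℝ) = ‖L v‖ := by rw [hLv, norm_one]
    _ ≤ ‖L‖ * ‖v‖ := L.le_opNorm v
    _ ≤ ‖L‖ := mul_le_of_le_one_right (norm_nonneg L) hv

/-- Proposition 6.2 of Rieffel: if `v` is a smooth point of the unit sphere of a
finite-dimensional real normed space `V`, with (unique) support functional `σ`, then
`φ_y(b_v) = lim_{t→∞} (‖t·v‖ − ‖t·v − y‖) = σ(y)` for every `y ∈ V`. -/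
theorem stmt8 {V : Type*} [NormedAddCommGroup V] [NormedSpace ℝ V]
    [FiniteDimensional ℝ V]
    (v : V) (hv : ‖v‖ = 1) (σ : V →L[ℝ] ℝ) (hσnorm : ‖σ‖ = 1) (hσv : σ v = 1)
    (huniq : ∀ τ : V →L[ℝ] ℝ, ‖τ‖ = 1 → τ v = 1 → τ = σ) :
    ∀ y : V, Filter.Tendsto (fun t : ℝ => ‖t • v‖ - ‖t • v - y‖)
      Filter.atTop (nhds (σ y)) := by
  intro y
  choose τ hτ hτy using fun t : ℝ => exists_dual_vector'' ℝ (t • v - y)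
  have hτσ : Tendsto τ atTop (𝓝 σ) := tendsto_of_tendsto_apply_of_smooth hv.le huniq hτ
    (tendsto_apply_of_apply_smul_sub_eq_norm hv hτ hτy)
  refine tendsto_of_tendsto_of_tendsto_of_le_of_le'
    (((ContinuousLinearMap.apply ℝ ℝ y).continuous.tendsto σ).comp hτσ) tendsto_const_nhds
    (Eventually.of_forall fun t => apply_le_norm_sub_norm_sub (hτ t) (hτy t)) ?_
  filter_upwards [eventually_ge_atTop 0] with t ht
  refine norm_sub_norm_sub_le_apply hσnorm.le ?_ y
  rw [map_smul, hσv, norm_smul, hv, Real.norm_of_nonneg ht, smul_eq_mul, mul_one]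
end

section
/- Let V be a finite-dimensional real normed space. (a) If w ∈ V and r ≥ 0 satisfy |σ_v(w)| ≤ r for every smooth point v of the unit sphere of V, then ‖w‖ ≤ r. (b) The closed convex hull of the set {σ_v : v a smooth point of the unit sphere of V} is the closed unit ball of the dual space V′ for the dual norm. -/
/-- `σ` is the support functional of the smooth point `v` of the unit sphere of `V`:
`‖v‖ = 1` and `σ` is the unique norm-one functional with `σ(v) = 1`. -/
def IsSupportFunctionalOfSmoothPoint {V : Type*} [NormedAddCommGroup V]
    [NormedSpace ℝ V] (v : V) (σ : V →L[ℝ] ℝ) : Prop :=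
  ‖v‖ = 1 ∧ ‖σ‖ = 1 ∧ σ v = 1 ∧ ∀ τ : V →L[ℝ] ℝ, ‖τ‖ = 1 → τ v = 1 → τ = σ

/-!
Where the norm is differentiable, at `u ≠ 0`, its derivative `f` has `‖f‖ = 1` and `f u = ‖u‖`;
any other such functional `τ` makes `‖·‖ - τ` minimal at `u`, so `τ = f`. Hence
`f` is the support functional at the smooth point `u / ‖u‖`. Since the norm is
differentiable on a dense set (Rademacher), `‖u‖ = f u ≤ f w + ‖u - w‖` for a dense set of `u`,
and letting `u → w` gives (a). For (b), a functional outside the closed convex hull is separated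
from it by evaluation at some `w` (the dual of `V′` is `V`), and (a) bounds `‖w‖` by the
separating constant, contradicting `‖τ‖ ≤ 1`.
-/

open Set Metric

section SupportFunctional

variable {E : Type*} [NormedAddCommGroup E] [NormedSpace ℝ E]

theorem StrongDual.apply_le_norm_of_norm_le_one {τ : StrongDual ℝ E} (hτ : ‖τ‖ ≤ 1) (y : E) :
    τ y ≤ ‖y‖ :=
  (le_abs_self _).trans (by simpa using τ.le_of_opNorm_le hτ y)

theorem HasFDerivAt.eq_of_norm_le_one_of_apply_eq_norm {u : E} {f τ : StrongDual ℝ E}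
    (hf : HasFDerivAt (‖·‖) f u) (hτ : ‖τ‖ ≤ 1) (hτu : τ u = ‖u‖) : τ = f := by
  have hmin : IsLocalMin (fun y => ‖y‖ - τ y) u := by
    refine Filter.Eventually.of_forall fun y => ?_
    simpa [hτu] using StrongDual.apply_le_norm_of_norm_le_one hτ y
  exact (sub_eq_zero.mp (hmin.hasFDerivAt_eq_zero (hf.sub τ.hasFDerivAt))).symm

theorem isSupportFunctionalOfSmoothPoint_fderiv_norm [Nontrivial E] {u : E}
    (hu : DifferentiableAt ℝ (‖·‖) u) :
    IsSupportFunctionalOfSmoothPoint (‖u‖⁻¹ • u) (fderiv ℝ (‖·‖) u) := by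
  have hu0 : 0 < ‖u‖ := norm_pos_iff.mpr fun h => not_differentiableAt_norm_zero E (h ▸ hu)
  have hv : ‖‖u‖⁻¹ • u‖ = 1 := by
    rw [norm_smul, norm_inv, norm_norm, inv_mul_cancel₀ hu0.ne']
  have hfv : HasFDerivAt (‖·‖) (fderiv ℝ (‖·‖) u) (‖u‖⁻¹ • u) :=
    hu.hasFDerivAt.hasFDerivAt_norm_smul_pos (inv_pos.mpr hu0)
  refine ⟨hv, norm_fderiv_norm hu, ?_, fun τ hτ hτv => hfv.eq_of_norm_le_one_of_apply_eq_norm hτ.le ?_⟩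
  · rw [← hfv.fderiv, hfv.differentiableAt.fderiv_norm_self, hv]
  · rw [hτv, hv]

theorem norm_le_of_forall_isSupportFunctionalOfSmoothPoint_apply_le [FiniteDimensional ℝ E]
    [Nontrivial E] {w : E} {r : ℝ}
    (h : ∀ (v : E) (σ : StrongDual ℝ E), IsSupportFunctionalOfSmoothPoint v σ → σ w ≤ r) :
    ‖w‖ ≤ r := by
  have hdense : {u : E | DifferentiableAt ℝ (‖·‖) u} ⊆ {u | ‖u‖ - ‖u - w‖ ≤ r} := by
    intro u hu
    set f := fderiv ℝ (‖·‖) u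
    have hfw := h _ _ (isSupportFunctionalOfSmoothPoint_fderiv_norm hu)
    have hf : f (u - w) ≤ ‖u - w‖ :=
      StrongDual.apply_le_norm_of_norm_le_one (norm_fderiv_norm hu).le (u - w)
    have hsplit : ‖u‖ = f w + f (u - w) := by
      rw [map_sub, ← DifferentiableAt.fderiv_norm_self hu]; ring
    show ‖u‖ - ‖u - w‖ ≤ r
    linarith
  have hclosed : IsClosed {u : E | ‖u‖ - ‖u - w‖ ≤ r} :=
    isClosed_le (by fun_prop) continuous_const
  have hall := hclosed.closure_subset_iff.mpr hdense
  rw [dense_differentiableAt_norm.closure_eq] at hall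
  simpa using hall (mem_univ w)

theorem StrongDual.exists_eq_apply_of_finiteDimensional [FiniteDimensional ℝ E]
    (F : StrongDual ℝ (StrongDual ℝ E)) : ∃ w : E, ∀ σ : StrongDual ℝ E, F σ = σ w := by
  let g : Module.Dual ℝ (Module.Dual ℝ E) := F.toLinearMap ∘ₗ
    (LinearMap.toContinuousLinearMap : Module.Dual ℝ E ≃ₗ[ℝ] StrongDual ℝ E).toLinearMap
  exact ⟨(Module.evalEquiv ℝ E).symm g, fun σ => (Module.apply_evalEquiv_symm_apply ℝ E σ g).symm⟩

theorem closure_convexHull_eq_closedBall_of_forall_apply_le [FiniteDimensional ℝ E]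
    {S : Set (StrongDual ℝ E)} (hS : S ⊆ closedBall 0 1)
    (hnorm : ∀ (w : E) (r : ℝ), (∀ σ ∈ S, σ w ≤ r) → ‖w‖ ≤ r) :
    closure (convexHull ℝ S) = closedBall 0 1 := by
  refine (closure_minimal (convexHull_min hS (convex_closedBall _ _)) isClosed_closedBall).antisymm
    fun τ hτ => ?_
  by_contra hτS
  obtain ⟨F, c, hFS, hFτ⟩ :=
    geometric_hahn_banach_closed_point (convex_convexHull ℝ S).closure isClosed_closure hτS
  obtain ⟨w, hFw⟩ := StrongDual.exists_eq_apply_of_finiteDimensional F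
  have hw : ‖w‖ ≤ c :=
    hnorm w c fun σ hσ => hFw σ ▸ (hFS σ (subset_closure (subset_convexHull ℝ S hσ))).le
  linarith [hFw τ, StrongDual.apply_le_norm_of_norm_le_one (mem_closedBall_zero_iff.mp hτ) w]

end SupportFunctional

/-- Proposition 6.7 of Rieffel: (a) if `|σ_v(w)| ≤ r` for every smooth point `v` of the
unit sphere, then `‖w‖ ≤ r`; (b) the closed convex hull of the support functionals at
smooth points is the closed unit ball of the dual space. -/
theorem stmt10 {V : Type*} [NormedAddCommGroup V] [NormedSpace ℝ V]
    [FiniteDimensional ℝ V] [Nontrivial V] :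
    (∀ (w : V) (r : ℝ), 0 ≤ r →
      (∀ (v : V) (σ : V →L[ℝ] ℝ), IsSupportFunctionalOfSmoothPoint v σ → |σ w| ≤ r) →
      ‖w‖ ≤ r) ∧
    closure (convexHull ℝ
        {σ : V →L[ℝ] ℝ | ∃ v : V, IsSupportFunctionalOfSmoothPoint v σ}) =
      Metric.closedBall (0 : V →L[ℝ] ℝ) 1 := by
  refine ⟨fun w r _ h => norm_le_of_forall_isSupportFunctionalOfSmoothPoint_apply_le
    fun v σ hσ => (le_abs_self _).trans (h v σ hσ), ?_⟩
  refine closure_convexHull_eq_closedBall_of_forall_apply_le ?_ fun w r h =>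
    norm_le_of_forall_isSupportFunctionalOfSmoothPoint_apply_le fun v σ hσ => h σ ⟨v, hσ⟩
  rintro σ ⟨v, -, hσ, -⟩
  exact mem_closedBall_zero_iff.mpr hσ.le
end

section
/- Let ‖·‖ be a norm on ℝ^d, let v ∈ ℝ^d with ‖v‖ = 1, let (t_k)_{k≥1} be a strictly increasing unbounded sequence of positive reals, and let x_k ∈ ℤ^d with ‖x_k − t_k·v‖ < 1/k for every k ≥ 1. Set T = {0} ∪ {t_k : k ≥ 1}, and define γ : T → ℝ^d by γ(0) = 0 and γ(t_k) = x_k. Then γ is an almost-geodesic ray in (ℝ^d, ‖·‖), and for every y ∈ ℝ^d the limits lim_{k→∞}(‖x_k‖ − ‖x_k − y‖) and lim_{t→+∞}(‖t·v‖ − ‖t·v − y‖) exist and are equal (that is, γ determines the same Busemann point as the linear geodesic ray t ↦ t·v). -/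
/-!
Since `‖x_k - t_k v‖ < 1/k` and `r ↦ r v` is a geodesic ray, the triangle inequality gives
`|‖x_k - x_j‖ + ‖x_j‖ - t_k| < 2/j + 1/k` for `j ≤ k`, which is the almost-geodesic property.
For the Busemann point, `r ↦ ‖r v‖ - ‖r v - y‖` is monotone on `[0, ∞)` and bounded by `‖y‖`,
hence converges, and `a ↦ ‖a‖ - ‖a - y‖` is `2`-Lipschitz, so its values at `x_k` and at
`t_k v` have the same limit.
-/

open Filter Topology Set

namespace Seminorm

variable {E : Type*} [AddCommGroup E] [Module ℝ E] (p : Seminorm ℝ E) {v : E}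

lemma map_smul_of_map_eq_one (hv : p v = 1) {r : ℝ} (hr : 0 ≤ r) : p (r • v) = r := by
  rw [map_smul_eq_mul, hv, mul_one, Real.norm_of_nonneg hr]

lemma abs_map_sub_add_map_sub_le (hv : p v = 1) {s u : ℝ} (hs : 0 ≤ s) (hsu : s ≤ u)
    (a b : E) : |p (b - a) + p a - u| ≤ 2 * p (a - s • v) + p (b - u • v) := by
  have hba : |p (b - a) - p ((u - s) • v)| ≤ p (b - u • v) + p (a - s • v) := calc
    _ ≤ p ((b - a) - (u - s) • v) := abs_sub_map_le_sub p _ _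
    _ = p ((b - u • v) - (a - s • v)) := by congr 1; module
    _ ≤ p (b - u • v) + p (a - s • v) := map_sub_le_add p _ _
  have ha : |p a - p (s • v)| ≤ p (a - s • v) := abs_sub_map_le_sub p _ _
  rw [p.map_smul_of_map_eq_one hv (sub_nonneg.2 hsu)] at hba
  rw [p.map_smul_of_map_eq_one hv hs] at ha
  rw [abs_le] at hba ha ⊢
  constructor <;> linarith

lemma exists_forall_abs_map_sub_add_map_lt (hv : p v = 1) {t : ℕ → ℝ}
    (ht : ∀ k, 1 ≤ k → 0 ≤ t k) {a : ℕ → E} (ha : ∀ k, 1 ≤ k → p (a k - t k • v) < 1 / k)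
    {ε : ℝ} (hε : 0 < ε) : ∃ K, 1 ≤ K ∧
      ∀ j k, K ≤ j → j ≤ k → t j ≤ t k → |p (a k - a j) + p (a j) - t k| < ε := by
  obtain ⟨n, hn⟩ := exists_nat_one_div_lt (div_pos hε three_pos)
  refine ⟨n + 1, n.succ_pos, fun j k hj hjk htjk => ?_⟩
  have hj' : (n + 1 : ℝ) ≤ j := by exact_mod_cast hj
  have hjk' : (j : ℝ) ≤ k := by exact_mod_cast hjk
  have hj_pos : (0 : ℝ) < j := by linarith
  have hkj : 1 / (k : ℝ) ≤ 1 / j := one_div_le_one_div_of_le hj_pos hjk'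
  have hjn : 1 / (j : ℝ) ≤ 1 / (n + 1) := one_div_le_one_div_of_le (by positivity) hj'
  calc |p (a k - a j) + p (a j) - t k|
      ≤ 2 * p (a j - t j • v) + p (a k - t k • v) :=
        p.abs_map_sub_add_map_sub_le hv (ht j (by omega)) htjk _ _
    _ < 2 * (1 / j) + 1 / k := by
        gcongr
        exacts [ha j (by omega), ha k (by omega)]
    _ < ε := by linarith

lemma map_sub_map_sub_le (a y : E) : p a - p (a - y) ≤ p y := by
  have := map_add_le_add p (a - y) y
  rw [sub_add_cancel] at this
  linarith

lemma abs_sub_map_sub_sub_le (a b y : E) :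
    |(p a - p (a - y)) - (p b - p (b - y))| ≤ 2 * p (a - b) := calc
  _ = |(p a - p b) - (p (a - y) - p (b - y))| := by ring_nf
  _ ≤ |p a - p b| + |p (a - y) - p (b - y)| := abs_sub _ _
  _ ≤ p (a - b) + p ((a - y) - (b - y)) :=
      add_le_add (abs_sub_map_le_sub p _ _) (abs_sub_map_le_sub p _ _)
  _ = 2 * p (a - b) := by rw [sub_sub_sub_cancel_right]; ring

lemma monotoneOn_map_smul_sub_map_smul_sub (hv : p v = 1) (y : E) :
    MonotoneOn (fun r : ℝ => p (r • v) - p (r • v - y)) (Ici 0) := by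
  intro r (hr : 0 ≤ r) s _ hrs
  have hs : p (s • v - y) ≤ (s - r) + p (r • v - y) := calc
    _ = p ((s - r) • v + (r • v - y)) := by congr 1; module
    _ ≤ p ((s - r) • v) + p (r • v - y) := map_add_le_add p _ _
    _ = (s - r) + p (r • v - y) := by rw [p.map_smul_of_map_eq_one hv (sub_nonneg.2 hrs)]
  dsimp only
  rw [p.map_smul_of_map_eq_one hv hr, p.map_smul_of_map_eq_one hv (hr.trans hrs)]
  linarith

lemma exists_tendsto_map_smul_sub_map_smul_sub (hv : p v = 1) (y : E) :
    ∃ l, Tendsto (fun r : ℝ => p (r • v) - p (r • v - y)) atTop (𝓝 l) := by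
  set f := fun r : ℝ => p (r • v) - p (r • v - y)
  have hmono : Monotone fun r => f (max r 0) := fun r s hrs =>
    p.monotoneOn_map_smul_sub_map_smul_sub hv y (le_max_right r 0) (le_max_right s 0)
      (max_le_max_right 0 hrs)
  have hbdd : BddAbove (range fun r => f (max r 0)) :=
    ⟨p y, by rintro _ ⟨r, rfl⟩; exact p.map_sub_map_sub_le _ _⟩
  refine ⟨_, (tendsto_atTop_ciSup hmono hbdd).congr' ?_⟩
  filter_upwards [eventually_ge_atTop 0] with r hr
  rw [max_eq_left hr]

lemma tendsto_map_sub_map_sub_of_tendsto_map_sub_smul {ι : Type*} {l : Filter ι}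
    {t : ι → ℝ} {a : ι → E} {y : E} {c : ℝ}
    (hc : Tendsto (fun r : ℝ => p (r • v) - p (r • v - y)) atTop (𝓝 c))
    (ht : Tendsto t l atTop) (ha : Tendsto (fun i => p (a i - t i • v)) l (𝓝 0)) :
    Tendsto (fun i => p (a i) - p (a i - y)) l (𝓝 c) := by
  refine (hc.comp ht).congr_dist
    (squeeze_zero (fun _ => dist_nonneg) (fun i => ?_) (by simpa using ha.const_mul 2))
  rw [Real.dist_eq, abs_sub_comm]
  exact p.abs_sub_map_sub_sub_le _ _ _

end Seminorm

theorem stmt12_general {d : ℕ} (N : Seminorm ℝ (Fin d → ℝ))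
    (v : Fin d → ℝ) (hv : N v = 1)
    (t : ℕ → ℝ) (htmono : ∀ j k : ℕ, 1 ≤ j → j < k → t j < t k)
    (htpos : ∀ k, 1 ≤ k → 0 < t k)
    (htunbdd : ∀ M : ℝ, ∃ k, 1 ≤ k ∧ M < t k)
    (x : ℕ → (Fin d → ℤ))
    (hx : ∀ k : ℕ, 1 ≤ k → N ((fun i => (x k i : ℝ)) - t k • v) < 1 / k)
    (T : Set ℝ) (hT : T = {0} ∪ {r : ℝ | ∃ k, 1 ≤ k ∧ r = t k})
    (γ : ℝ → (Fin d → ℝ)) (hγ0 : γ 0 = 0)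
    (hγ : ∀ k : ℕ, 1 ≤ k → γ (t k) = fun i => (x k i : ℝ)) :
    -- `γ` is an almost-geodesic ray for the metric coming from the norm `N`
    (∀ ε : ℝ, 0 < ε → ∃ M : ℝ, ∀ u ∈ T, ∀ s ∈ T, M ≤ s → s ≤ u →
      |N (γ u - γ s) + N (γ s - γ 0) - u| < ε) ∧
    -- `γ` determines the same Busemann point as the ray `t ↦ t·v`
    (∀ y : Fin d → ℝ, ∃ l : ℝ,
      Filter.Tendsto
        (fun k : ℕ => N (fun i => (x k i : ℝ)) - N ((fun i => (x k i : ℝ)) - y))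
        Filter.atTop (nhds l) ∧
      Filter.Tendsto (fun r : ℝ => N (r • v) - N (r • v - y))
        Filter.atTop (nhds l)) := by
  have hstrict : StrictMonoOn t (Ici 1) := fun j hj k _ hjk => htmono j k hj hjk
  have ht : Tendsto t atTop atTop := tendsto_atTop.2 fun M =>
    let ⟨k₀, hk₀, hM⟩ := htunbdd M
    eventually_atTop.2 ⟨k₀, fun k hk => hM.le.trans (hstrict.monotoneOn hk₀ (hk₀.trans hk) hk)⟩
  have happrox : Tendsto (fun k => N ((fun i => (x k i : ℝ)) - t k • v)) atTop (𝓝 0) :=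
    squeeze_zero' (Eventually.of_forall fun _ => apply_nonneg _ _)
      (eventually_atTop.2 ⟨1, fun k hk => (hx k hk).le⟩) tendsto_one_div_atTop_nhds_zero_nat
  refine ⟨fun ε hε => ?_, fun y => ?_⟩
  · obtain ⟨K, hK, hgeo⟩ :=
      N.exists_forall_abs_map_sub_add_map_lt hv (fun k hk => (htpos k hk).le) hx hε
    have hT_index : ∀ r ∈ T, t K ≤ r → ∃ k, K ≤ k ∧ r = t k := by
      rintro r hr hKr
      rw [hT] at hr
      rcases hr with rfl | ⟨k, hk, rfl⟩
      · exact absurd hKr (not_le.2 (htpos K hK))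
      · exact ⟨k, (hstrict.le_iff_le hK hk).1 hKr, rfl⟩
    refine ⟨t K, fun u hu s hs hKs hsu => ?_⟩
    obtain ⟨j, hj, rfl⟩ := hT_index s hs hKs
    obtain ⟨k, hk, rfl⟩ := hT_index u hu (hKs.trans hsu)
    rw [hγ k (hK.trans hk), hγ j (hK.trans hj), hγ0, sub_zero]
    exact hgeo j k hj ((hstrict.le_iff_le (hK.trans hj) (hK.trans hk)).1 hsu) hsu
  · obtain ⟨l, hl⟩ := N.exists_tendsto_map_smul_sub_map_smul_sub hv y
    exact ⟨l, N.tendsto_map_sub_map_sub_of_tendsto_map_sub_smul hl ht happrox, hl⟩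

/-- Lemma 7.3 of Rieffel: if `(t_k)` is strictly increasing, unbounded and positive, and
`x_k ∈ ℤ^d` satisfies `‖x_k − t_k·v‖ < 1/k`, then `γ` with `γ(0) = 0`, `γ(t_k) = x_k` is
an almost-geodesic ray (for `T = {0} ∪ {t_k}`) which determines the same Busemann point
as the linear geodesic ray `t ↦ t·v`. -/
theorem stmt12 {d : ℕ} (N : Seminorm ℝ (Fin d → ℝ))
    (hNdef : ∀ w : Fin d → ℝ, N w = 0 → w = 0)
    (v : Fin d → ℝ) (hv : N v = 1)
    (t : ℕ → ℝ) (htmono : ∀ j k : ℕ, 1 ≤ j → j < k → t j < t k)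
    (htpos : ∀ k, 1 ≤ k → 0 < t k)
    (htunbdd : ∀ M : ℝ, ∃ k, 1 ≤ k ∧ M < t k)
    (x : ℕ → (Fin d → ℤ))
    (hx : ∀ k : ℕ, 1 ≤ k → N ((fun i => (x k i : ℝ)) - t k • v) < 1 / k)
    (T : Set ℝ) (hT : T = {0} ∪ {r : ℝ | ∃ k, 1 ≤ k ∧ r = t k})
    (γ : ℝ → (Fin d → ℝ)) (hγ0 : γ 0 = 0)
    (hγ : ∀ k : ℕ, 1 ≤ k → γ (t k) = fun i => (x k i : ℝ)) :
    -- `γ` is an almost-geodesic ray for the metric coming from the norm `N`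
    (∀ ε : ℝ, 0 < ε → ∃ M : ℝ, ∀ u ∈ T, ∀ s ∈ T, M ≤ s → s ≤ u →
      |N (γ u - γ s) + N (γ s - γ 0) - u| < ε) ∧
    -- `γ` determines the same Busemann point as the ray `t ↦ t·v`
    (∀ y : Fin d → ℝ, ∃ l : ℝ,
      Filter.Tendsto
        (fun k : ℕ => N (fun i => (x k i : ℝ)) - N ((fun i => (x k i : ℝ)) - y))
        Filter.atTop (nhds l) ∧
      Filter.Tendsto (fun r : ℝ => N (r • v) - N (r • v - y))
        Filter.atTop (nhds l)) :=
  stmt12_general N v hv t htmono htpos htunbdd x hx T hT γ hγ0 hγ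
end

section
/- Let ‖·‖ be a norm on ℝ^d and let v be a smooth point of its unit sphere, with support functional σ_v. Then there exists a sequence (x_k) in ℤ^d with ‖x_k‖ → ∞ such that for all y, z ∈ ℤ^d, lim_{k→∞}(‖x_k − z‖ − ‖x_k − z − y‖) = σ_v(y). (This produces a Busemann point b_v of the metric boundary of (ℤ^d, ‖·‖) with φ_y(b_v) = σ_v(y) for all y ∈ ℤ^d, and shows that b_v is a fixed point for the translation action of ℤ^d on the boundary.) -/
open Filter

namespace Stmt13Aux

variable {d : ℕ}

/-- difference quotient -/
noncomputable def q (N : Seminorm ℝ (Fin d → ℝ)) (v w : Fin d → ℝ) (s : ℝ) : ℝ :=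
  (N (v + s • w) - 1) / s

/-- one-sided derivative (as an infimum) -/
noncomputable def p (N : Seminorm ℝ (Fin d → ℝ)) (v w : Fin d → ℝ) : ℝ :=
  sInf (q N v w '' Set.Ioi (0 : ℝ))

section Basic

variable {N : Seminorm ℝ (Fin d → ℝ)} {v : Fin d → ℝ} (hv : N v = 1)

include hv

lemma q_ge {w : Fin d → ℝ} {s : ℝ} (hs : 0 < s) : -N w ≤ q N v w s := by
  have h1 : N v ≤ N (v + s • w) + N (s • w) := by
    calc N v = N ((v + s • w) + (-(s • w))) := by ring_nf
    _ ≤ N (v + s • w) + N (-(s • w)) := map_add_le_add N _ _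
    _ = N (v + s • w) + N (s • w) := by rw [map_neg_eq_map]
  have h2 : N (s • w) = s * N w := by
    rw [map_smul_eq_mul, Real.norm_eq_abs, abs_of_pos hs]
  rw [q, le_div_iff₀ hs]
  nlinarith [hv]

lemma q_mono {w : Fin d → ℝ} {s t : ℝ} (hs : 0 < s) (hst : s ≤ t) :
    q N v w s ≤ q N v w t := by
  have ht : 0 < t := lt_of_lt_of_le hs hst
  have hid : t • (v + s • w) = (t - s) • v + s • (v + t • w) := by
    rw [smul_add, smul_add, smul_smul, smul_smul, sub_smul, mul_comm t s]
    abel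
  have hb : t * N (v + s • w) ≤ (t - s) + s * N (v + t • w) := by
    calc t * N (v + s • w) = ‖t‖ * N (v + s • w) := by
          rw [Real.norm_eq_abs, abs_of_pos ht]
    _ = N (t • (v + s • w)) := (map_smul_eq_mul N _ _).symm
    _ = N ((t - s) • v + s • (v + t • w)) := by rw [hid]
    _ ≤ N ((t - s) • v) + N (s • (v + t • w)) := map_add_le_add N _ _
    _ = (t - s) + s * N (v + t • w) := by
          rw [map_smul_eq_mul, map_smul_eq_mul, Real.norm_eq_abs, Real.norm_eq_abs,
            abs_of_nonneg (by linarith), abs_of_pos hs, hv, mul_one]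
  rw [q, q, div_le_div_iff₀ hs ht]
  nlinarith

lemma q_subadd {w₁ w₂ : Fin d → ℝ} {s : ℝ} (hs : 0 < s) :
    q N v (w₁ + w₂) s ≤ q N v w₁ (2 * s) + q N v w₂ (2 * s) := by
  have hid : (2 : ℝ) • (v + s • (w₁ + w₂)) = (v + (2 * s) • w₁) + (v + (2 * s) • w₂) := by
    module
  have hb : 2 * N (v + s • (w₁ + w₂)) ≤ N (v + (2 * s) • w₁) + N (v + (2 * s) • w₂) := by
    calc 2 * N (v + s • (w₁ + w₂)) = ‖(2 : ℝ)‖ * N (v + s • (w₁ + w₂)) := by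
          rw [Real.norm_eq_abs, abs_of_pos (by norm_num)]
    _ = N ((2 : ℝ) • (v + s • (w₁ + w₂))) := (map_smul_eq_mul N _ _).symm
    _ = N ((v + (2 * s) • w₁) + (v + (2 * s) • w₂)) := by rw [hid]
    _ ≤ _ := map_add_le_add N _ _
  have h2s : 0 < 2 * s := by linarith
  rw [q, q, q, ← add_div, div_le_div_iff₀ hs h2s]
  nlinarith

lemma bddBelow_q (w : Fin d → ℝ) : BddBelow (q N v w '' Set.Ioi (0 : ℝ)) := by
  refine ⟨-N w, ?_⟩
  rintro x ⟨s, hs, rfl⟩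
  exact q_ge hv hs

lemma nonempty_q (w : Fin d → ℝ) : (q N v w '' Set.Ioi (0 : ℝ)).Nonempty :=
  ⟨q N v w 1, ⟨1, by norm_num, rfl⟩⟩

lemma p_le_q {w : Fin d → ℝ} {s : ℝ} (hs : 0 < s) : p N v w ≤ q N v w s :=
  csInf_le (bddBelow_q hv w) ⟨s, hs, rfl⟩

lemma exists_q_lt (w : Fin d → ℝ) {ε : ℝ} (hε : 0 < ε) :
    ∃ s > 0, q N v w s < p N v w + ε := by
  obtain ⟨x, ⟨s, hs, rfl⟩, hlt⟩ :=
    exists_lt_of_csInf_lt (nonempty_q hv w) (show p N v w < p N v w + ε by linarith)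
  exact ⟨s, hs, hlt⟩

lemma p_zero : p N v 0 = 0 := by
  have h1 : ∀ s : ℝ, 0 < s → q N v 0 s = 0 := by
    intro s hs
    rw [q, smul_zero, add_zero, hv]
    simp
  refine le_antisymm ?_ ?_
  · have := p_le_q hv (w := 0) (s := 1) one_pos
    rwa [h1 1 one_pos] at this
  · refine le_csInf (nonempty_q hv 0) ?_
    rintro x ⟨s, hs, rfl⟩
    rw [h1 s hs]

lemma p_add (w₁ w₂ : Fin d → ℝ) : p N v (w₁ + w₂) ≤ p N v w₁ + p N v w₂ := by
  refine le_of_forall_pos_le_add ?_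
  intro ε hε
  obtain ⟨s₁, hs₁, h1⟩ := exists_q_lt hv w₁ (half_pos hε)
  obtain ⟨s₂, hs₂, h2⟩ := exists_q_lt hv w₂ (half_pos hε)
  set s := min s₁ s₂ with hsdef
  have hs : 0 < s := lt_min hs₁ hs₂
  have hs2 : 0 < s / 2 := by positivity
  have key : q N v (w₁ + w₂) (s / 2) ≤ q N v w₁ (2 * (s / 2)) + q N v w₂ (2 * (s / 2)) :=
    q_subadd hv hs2
  have hss : (2 : ℝ) * (s / 2) = s := by ring
  rw [hss] at key
  calc p N v (w₁ + w₂) ≤ q N v (w₁ + w₂) (s / 2) := p_le_q hv hs2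
  _ ≤ q N v w₁ s + q N v w₂ s := key
  _ ≤ q N v w₁ s₁ + q N v w₂ s₂ :=
      add_le_add (q_mono hv hs (min_le_left _ _)) (q_mono hv hs (min_le_right _ _))
  _ ≤ p N v w₁ + p N v w₂ + ε := by linarith

lemma p_smul {w : Fin d → ℝ} {c : ℝ} (hc : 0 < c) : p N v (c • w) = c * p N v w := by
  have hq : ∀ s : ℝ, 0 < s → q N v (c • w) s = c * q N v w (c * s) := by
    intro s hs
    rw [q, q, smul_smul, mul_comm s c]
    field_simp
  refine le_antisymm ?_ ?_
  · refine le_of_forall_pos_le_add ?_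
    intro ε hε
    obtain ⟨s, hs, hlt⟩ := exists_q_lt hv w (show 0 < ε / c by positivity)
    have hsc : 0 < s / c := by positivity
    have := p_le_q hv (w := c • w) hsc
    rw [hq _ hsc, mul_div_cancel₀ _ (ne_of_gt hc)] at this
    calc p N v (c • w) ≤ c * q N v w s := this
    _ ≤ c * (p N v w + ε / c) := by
        apply mul_le_mul_of_nonneg_left (le_of_lt hlt) hc.le
    _ = c * p N v w + ε := by field_simp
  · refine le_of_forall_pos_le_add ?_
    intro ε hε
    obtain ⟨s, hs, hlt⟩ := exists_q_lt hv (c • w) hε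
    have hcs : 0 < c * s := by positivity
    have h1 : c * q N v w (c * s) < p N v (c • w) + ε := by rw [← hq s hs]; exact hlt
    have h2 : p N v w ≤ q N v w (c * s) := p_le_q hv hcs
    nlinarith

lemma p_le_N (w : Fin d → ℝ) : p N v w ≤ N w := by
  have h1 := p_le_q hv (w := w) (s := 1) one_pos
  have h2 : q N v w 1 ≤ N w := by
    rw [q, one_smul, div_one]
    have := map_add_le_add N v w
    linarith [hv]
  linarith

lemma p_v_le : p N v v ≤ 1 := by
  have h1 := p_le_q hv (w := v) (s := 1) one_pos
  have h2 : q N v v 1 = 1 := by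
    rw [q, one_smul, div_one]
    have : v + v = (2 : ℝ) • v := (two_smul ℝ v).symm
    rw [this, map_smul_eq_mul, Real.norm_eq_abs, hv]
    norm_num
  linarith

lemma p_neg_v_le : p N v (-v) ≤ -1 := by
  have h1 := p_le_q hv (w := -v) (s := (1 : ℝ) / 2) (by norm_num)
  have h2 : q N v (-v) (1 / 2) = -1 := by
    rw [q]
    have : v + (1 / 2 : ℝ) • (-v) = (1 / 2 : ℝ) • v := by
      rw [smul_neg]
      have : v = (1 : ℝ) • v := (one_smul ℝ v).symm
      nth_rewrite 1 [this]
      rw [← sub_eq_add_neg, ← sub_smul]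
      norm_num
    rw [this, map_smul_eq_mul, Real.norm_eq_abs, hv, mul_one,
      abs_of_pos (by norm_num : (0:ℝ) < 1/2)]
    norm_num
  linarith

lemma p_add_neg_nonneg (w : Fin d → ℝ) : 0 ≤ p N v w + p N v (-w) := by
  have := p_add hv w (-w)
  rw [add_neg_cancel, p_zero hv] at this
  linarith

end Basic

section Main

variable {d : ℕ} {N : Seminorm ℝ (Fin d → ℝ)} {v : Fin d → ℝ}
  {σ : (Fin d → ℝ) →ₗ[ℝ] ℝ}

lemma p_eq_sigma (hv : N v = 1)
    (hσle : ∀ w : Fin d → ℝ, |σ w| ≤ N w) (hσv : σ v = 1)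
    (huniq : ∀ τ : (Fin d → ℝ) →ₗ[ℝ] ℝ,
      (∀ w : Fin d → ℝ, |τ w| ≤ N w) → τ v = 1 → τ = σ)
    (w : Fin d → ℝ) : p N v w = σ w := by
  by_cases hw : w = 0
  · subst hw
    rw [p_zero hv, map_zero]
  -- Hahn-Banach extension of the functional c • w ↦ c * p w
  set f : (Fin d → ℝ) →ₗ.[ℝ] ℝ := LinearPMap.mkSpanSingleton w (p N v w) hw with hf
  have hfdom : ∀ x : f.domain, f x ≤ p N v (x : Fin d → ℝ) := by
    rintro ⟨x, hx⟩
    obtain ⟨c, rfl⟩ := Submodule.mem_span_singleton.1 hx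
    have happ : f ⟨c • w, hx⟩ = c • p N v w := by
      exact LinearPMap.mkSpanSingleton'_apply _ _ _ c _
    rw [happ]
    rcases lt_trichotomy c 0 with hc | hc | hc
    · have h1 : p N v (c • w) = (-c) * p N v (-w) := by
        have : c • w = (-c) • (-w) := by rw [smul_neg, neg_smul, neg_neg]
        rw [this, p_smul hv (by linarith)]
      have h2 := p_add_neg_nonneg hv w
      rw [h1]
      have : c • p N v w = c * p N v w := rfl
      rw [this]
      nlinarith
    · subst hc
      simp [p_zero hv]
    · rw [p_smul hv hc]
      exact le_of_eq rfl
  obtain ⟨g, hg1, hg2⟩ := exists_extension_of_le_sublinear f (p N v)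
    (fun c hc x => p_smul hv hc) (fun x y => p_add hv x y) hfdom
  have hgw : g w = p N v w := by
    have := hg1 ⟨w, Submodule.mem_span_singleton_self w⟩
    rw [LinearPMap.mkSpanSingleton_apply] at this
    exact this
  have hgle : ∀ u, |g u| ≤ N u := by
    intro u
    rw [abs_le]
    constructor
    · have hgneg : g (-u) ≤ p N v (-u) := hg2 (-u)
      rw [map_neg] at hgneg
      have h3 := p_le_N hv (-u)
      rw [map_neg_eq_map] at h3
      linarith
    · exact le_trans (hg2 u) (p_le_N hv u)
  have hgv : g v = 1 := by
    have h1 : g v ≤ 1 := le_trans (hg2 v) (p_v_le hv)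
    have h2 : g (-v) ≤ -1 := le_trans (hg2 (-v)) (p_neg_v_le hv)
    rw [map_neg] at h2
    linarith
  have := huniq g hgle hgv
  rw [← this, hgw]

lemma N_bound (N : Seminorm ℝ (Fin d → ℝ)) :
    ∃ C : ℝ, 0 ≤ C ∧ ∀ u : Fin d → ℝ, N u ≤ C * ‖u‖ := by
  classical
  refine ⟨∑ i : Fin d, N (fun j => if i = j then 1 else 0), ?_, ?_⟩
  · exact Finset.sum_nonneg fun i _ => apply_nonneg N _
  · intro u
    have hu : u = ∑ i : Fin d, u i • fun j => if i = j then (1:ℝ) else 0 :=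
      pi_eq_sum_univ u
    calc N u = N (∑ i : Fin d, u i • fun j => if i = j then (1:ℝ) else 0) := by rw [← hu]
    _ ≤ ∑ i : Fin d, N (u i • fun j => if i = j then (1:ℝ) else 0) :=
        Finset.le_sum_of_subadditive N (map_zero N).le (map_add_le_add N) _ _
    _ = ∑ i : Fin d, ‖u i‖ * N (fun j => if i = j then (1:ℝ) else 0) := by
        simp [map_smul_eq_mul]
    _ ≤ ∑ i : Fin d, ‖u‖ * N (fun j => if i = j then (1:ℝ) else 0) := by
        refine Finset.sum_le_sum fun i _ => ?_
        exact mul_le_mul_of_nonneg_right (norm_le_pi_norm u i) (apply_nonneg N _)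
    _ = (∑ i : Fin d, N (fun j => if i = j then (1:ℝ) else 0)) * ‖u‖ := by
        rw [Finset.sum_mul]
        exact Finset.sum_congr rfl fun i _ => mul_comm _ _

/-- Key convergence lemma. -/
lemma key (hv : N v = 1)
    (hσle : ∀ w : Fin d → ℝ, |σ w| ≤ N w) (hσv : σ v = 1)
    (huniq : ∀ τ : (Fin d → ℝ) →ₗ[ℝ] ℝ,
      (∀ w : Fin d → ℝ, |τ w| ≤ N w) → τ v = 1 → τ = σ)
    (t : ℕ → ℝ) (ht : Tendsto t atTop atTop)
    (wseq : ℕ → Fin d → ℝ) (wl : Fin d → ℝ)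
    (hw : Tendsto wseq atTop (nhds wl)) :
    Tendsto (fun k => N (t k • v + wseq k) - t k) atTop (nhds (σ wl)) := by
  -- error term goes to 0
  have herr : Tendsto (fun k => N (wseq k - wl)) atTop (nhds 0) := by
    obtain ⟨C, hC0, hC⟩ := N_bound N
    have h1 : Tendsto (fun k => ‖wseq k - wl‖) atTop (nhds 0) :=
      tendsto_iff_norm_sub_tendsto_zero.1 hw
    have h2 : Tendsto (fun k => C * ‖wseq k - wl‖) atTop (nhds 0) := by
      have := h1.const_mul C
      simpa using this
    exact squeeze_zero (fun k => apply_nonneg N _) (fun k => hC _) h2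
  -- the inner limit with fixed wl
  have hinner : Tendsto (fun k => N (t k • v + wl) - t k) atTop (nhds (σ wl)) := by
    have hPeq : p N v wl = σ wl := p_eq_sigma hv hσle hσv huniq wl
    have hqid : ∀ k, 0 < t k → N (t k • v + wl) - t k = q N v wl (1 / t k) := by
      intro k hk
      have h1 : t k • (v + (1 / t k) • wl) = t k • v + wl := by
        rw [smul_add, smul_smul, mul_one_div, div_self (ne_of_gt hk), one_smul]
      rw [q]
      rw [← h1, map_smul_eq_mul, Real.norm_eq_abs, abs_of_pos hk]
      field_simp
    have hlow : ∀ k, σ wl ≤ N (t k • v + wl) - t k := by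
      intro k
      have h1 : σ (t k • v + wl) ≤ N (t k • v + wl) := le_of_abs_le (hσle _)
      rw [map_add, map_smul, hσv, smul_eq_mul, mul_one] at h1
      linarith
    rw [tendsto_order]
    constructor
    · intro b hb
      exact Eventually.of_forall fun k => lt_of_lt_of_le hb (hlow k)
    · intro b hb
      obtain ⟨s, hs, hq⟩ := exists_q_lt hv wl (show 0 < b - σ wl by linarith)
      rw [hPeq] at hq
      have hev : ∀ᶠ k in atTop, max (1 / s) 1 ≤ t k := ht.eventually_ge_atTop _
      filter_upwards [hev] with k hk
      have htk : 0 < t k := lt_of_lt_of_le (by positivity) (le_trans (le_max_right _ _) hk)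
      have h1s : 1 / t k ≤ s := by
        rw [div_le_iff₀ htk]
        have h2 : 1 / s ≤ t k := le_trans (le_max_left _ _) hk
        rw [div_le_iff₀ hs] at h2
        linarith [mul_comm s (t k)]
      have : q N v wl (1 / t k) ≤ q N v wl s := q_mono hv (by positivity) h1s
      rw [hqid k htk]
      linarith
  -- squeeze
  have hup : ∀ k, N (t k • v + wseq k) - t k ≤ (N (t k • v + wl) - t k) + N (wseq k - wl) := by
    intro k
    have : N (t k • v + wseq k) ≤ N (t k • v + wl) + N (wseq k - wl) := by
      calc N (t k • v + wseq k) = N ((t k • v + wl) + (wseq k - wl)) := by ring_nf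
      _ ≤ _ := map_add_le_add N _ _
    linarith
  have hlo : ∀ k, (N (t k • v + wl) - t k) - N (wseq k - wl) ≤ N (t k • v + wseq k) - t k := by
    intro k
    have : N (t k • v + wl) ≤ N (t k • v + wseq k) + N (wseq k - wl) := by
      calc N (t k • v + wl) = N ((t k • v + wseq k) + (-(wseq k - wl))) := by ring_nf
      _ ≤ N (t k • v + wseq k) + N (-(wseq k - wl)) := map_add_le_add N _ _
      _ = N (t k • v + wseq k) + N (wseq k - wl) := by rw [map_neg_eq_map]
    linarith
  have hL : Tendsto (fun k => (N (t k • v + wl) - t k) - N (wseq k - wl)) atTop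
      (nhds (σ wl)) := by
    have := hinner.sub herr
    simpa using this
  have hU : Tendsto (fun k => (N (t k • v + wl) - t k) + N (wseq k - wl)) atTop
      (nhds (σ wl)) := by
    have := hinner.add herr
    simpa using this
  exact tendsto_of_tendsto_of_tendsto_of_le_of_le hL hU
    (fun k => hlo k) (fun k => hup k)

end Main
end Stmt13Aux

open Filter Stmt13Aux

/-- Proposition 7.4 of Rieffel: for a smooth point `v` of the unit sphere of a norm `N`
on `ℝ^d`, with support functional `σ` (the unique functional with `|σ| ≤ N` and
`σ(v) = 1`), there is a sequence `(x_k)` in `ℤ^d` going to infinity such that for all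
`y, z ∈ ℤ^d`, `lim_k (‖x_k − z‖ − ‖x_k − z − y‖) = σ(y)`.  This gives a Busemann point
`b_v ∈ ∂_ℓ ℤ^d` with `φ_y(b_v) = σ(y)`, fixed by the translation action of `ℤ^d`. -/
theorem stmt13 {d : ℕ} (N : Seminorm ℝ (Fin d → ℝ))
    (hNdef : ∀ w : Fin d → ℝ, N w = 0 → w = 0)
    (v : Fin d → ℝ) (hv : N v = 1)
    (σ : (Fin d → ℝ) →ₗ[ℝ] ℝ)
    (hσle : ∀ w : Fin d → ℝ, |σ w| ≤ N w) (hσv : σ v = 1)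
    (huniq : ∀ τ : (Fin d → ℝ) →ₗ[ℝ] ℝ,
      (∀ w : Fin d → ℝ, |τ w| ≤ N w) → τ v = 1 → τ = σ) :
    ∃ x : ℕ → (Fin d → ℤ),
      Filter.Tendsto (fun k : ℕ => N (fun i => (x k i : ℝ))) Filter.atTop
        Filter.atTop ∧
      ∀ y z : Fin d → ℤ,
        Filter.Tendsto
          (fun k : ℕ =>
            N ((fun i => (x k i : ℝ)) - fun i => (z i : ℝ)) -
            N (((fun i => (x k i : ℝ)) - fun i => (z i : ℝ)) - fun i => (y i : ℝ)))
          Filter.atTop (nhds (σ fun i => (y i : ℝ))) := by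
  classical
  -- fractional parts
  set frac : ℕ → Fin d → ℝ := fun k i => Int.fract ((k : ℝ) * v i) with hfrac
  have hfrac_mem : ∀ k, frac k ∈ Metric.closedBall (0 : Fin d → ℝ) 1 := by
    intro k
    rw [Metric.mem_closedBall, dist_zero_right,
      pi_norm_le_iff_of_nonneg (by norm_num : (0:ℝ) ≤ 1)]
    intro i
    rw [Real.norm_eq_abs, abs_of_nonneg (Int.fract_nonneg _)]
    exact le_of_lt (Int.fract_lt_one _)
  obtain ⟨wl, -, φ, hφ, hconv⟩ :=
    tendsto_subseq_of_bounded Metric.isBounded_closedBall hfrac_mem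
  set t : ℕ → ℝ := fun k => (φ k : ℝ) with ht_def
  have ht : Tendsto t atTop atTop :=
    tendsto_natCast_atTop_atTop.comp hφ.tendsto_atTop
  have hcast : ∀ k, (fun i => ((⌊(φ k : ℝ) * v i⌋ : ℤ) : ℝ)) = t k • v - frac (φ k) := by
    intro k
    funext i
    simp only [Pi.sub_apply, Pi.smul_apply, smul_eq_mul, hfrac, ht_def]
    exact (Int.self_sub_fract _).symm
  obtain ⟨C, hC0, hC⟩ := N_bound N
  have hNfrac : ∀ k, N (frac k) ≤ C := by
    intro k
    have h1 := hC (frac k)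
    have h2 : ‖frac k‖ ≤ 1 := by
      have := hfrac_mem k
      rwa [Metric.mem_closedBall, dist_zero_right] at this
    nlinarith
  refine ⟨fun k i => ⌊(φ k : ℝ) * v i⌋, ?_, ?_⟩
  · -- N (x k) → ∞
    refine tendsto_atTop_mono ?_ (tendsto_atTop_add_const_right _ (-C) ht)
    intro k
    have h1 : N (t k • v) = t k := by
      rw [map_smul_eq_mul, Real.norm_eq_abs, abs_of_nonneg (Nat.cast_nonneg _), hv, mul_one]
    have h2 : N (t k • v) ≤ N (t k • v - frac (φ k)) + N (frac (φ k)) := by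
      calc N (t k • v) = N ((t k • v - frac (φ k)) + frac (φ k)) := by rw [sub_add_cancel]
      _ ≤ _ := map_add_le_add N _ _
    rw [hcast k]
    have h3 := hNfrac (φ k)
    linarith
  · intro y z
    set Y : Fin d → ℝ := fun i => ((y i : ℤ) : ℝ) with hY
    set Z : Fin d → ℝ := fun i => ((z i : ℤ) : ℝ) with hZ
    have hw1 : Tendsto (fun k => -frac (φ k) - Z) atTop (nhds (-wl - Z)) := by
      have h := hconv.neg
      exact (h.sub_const Z)
    have hw2 : Tendsto (fun k => -frac (φ k) - Z - Y) atTop (nhds (-wl - Z - Y)) :=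
      hw1.sub_const Y
    have hkey1 := key hv hσle hσv huniq t ht _ _ hw1
    have hkey2 := key hv hσle hσv huniq t ht _ _ hw2
    have hsub := hkey1.sub hkey2
    have hval : σ (-wl - Z) - σ (-wl - Z - Y) = σ Y := by
      rw [← map_sub]
      congr 1
      abel
    rw [hval] at hsub
    refine Tendsto.congr (fun k => ?_) hsub
    have e1 : t k • v + (-frac (φ k) - Z) = (fun i => ((⌊(φ k : ℝ) * v i⌋ : ℤ) : ℝ)) - Z := by
      rw [hcast k]; abel
    have e2 : t k • v + (-frac (φ k) - Z - Y) =
        ((fun i => ((⌊(φ k : ℝ) * v i⌋ : ℤ) : ℝ)) - Z) - Y := by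
      rw [hcast k]; abel
    rw [e1, e2]
    ring
end

section
/- Let S be a finite subset of ℤ^d with S = −S and 0 ∉ S which generates ℤ^d, with word-length ℓ_S. Let σ : ℝ^d → ℝ be a linear functional with σ(s) ≤ 1 for all s ∈ S such that F = {s ∈ S : σ(s) = 1} is nonempty, let z_F = Σ_{s∈F} s and let G_F be the subgroup generated by F. Then for every y ∈ ℤ^d and every u ∈ G_F, the integer sequences n ↦ ℓ_S(n·z_F) − ℓ_S(n·z_F − y) and n ↦ ℓ_S(n·z_F) − ℓ_S(n·z_F − y − u) are eventually constant, and their eventual values m(y) and m(y+u) satisfy m(y+u) = m(y) + σ(u). -/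
/-! Write `τ` for `σ` on `ℤ^d`. As `τ ≤ 1` on `S`, `τ ≤ ℓ_S` everywhere, and since `τ = 1` on `F`
this forces `ℓ_S(n·z_F) = n·|F|`. Hence `n ↦ ℓ_S(n·z_F) − ℓ_S(n·z_F − y)` is nondecreasing
(because `ℓ_S(z_F) ≤ |F|`) and bounded above by `τ(y)`, so it is eventually constant, equal to
some `m(y)`. For `s ∈ F`, replacing `y` by `y + s` lowers each term by at most `1`, while
`ℓ_S((n+1)·z_F − y − s) ≤ ℓ_S(n·z_F − y) + |F| − 1` because `z_F − s` is a sum of `|F| − 1`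
generators; so `m(y + s) = m(y) + 1`, and induction over `G_F` gives `m(y + u) = m(y) + σ(u)`. -/

/-- The word-length of `x ∈ ℤ^d` with respect to a generating set `S`: the least `n ≥ 0`
such that `x` is a sum of `n` (not necessarily distinct) elements of `S`. -/
noncomputable def wordLength {d : ℕ} (S : Finset (Fin d → ℤ)) (x : Fin d → ℤ) : ℕ :=
  sInf {n : ℕ | ∃ g : Fin n → (Fin d → ℤ), (∀ i, g i ∈ S) ∧ ∑ i, g i = x}

open Filter Topology

section WordLength

variable {d : ℕ} {S : Finset (Fin d → ℤ)}

def IsSumOf (S : Finset (Fin d → ℤ)) (n : ℕ) (x : Fin d → ℤ) : Prop :=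
  ∃ g : Fin n → (Fin d → ℤ), (∀ i, g i ∈ S) ∧ ∑ i, g i = x

theorem isSumOf_zero : IsSumOf S 0 0 :=
  ⟨Fin.elim0, fun i => i.elim0, by simp⟩

theorem isSumOf_sum {T : Finset (Fin d → ℤ)} (hT : T ⊆ S) : IsSumOf S T.card (∑ s ∈ T, s) :=
  ⟨fun i => T.equivFin.symm i, fun i => hT (T.equivFin.symm i).2, by
    rw [T.equivFin.symm.sum_comp (fun t => (t : Fin d → ℤ))]; exact T.sum_coe_sort id⟩

theorem IsSumOf.add {m n : ℕ} {x y : Fin d → ℤ} (hx : IsSumOf S m x) (hy : IsSumOf S n y) :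
    IsSumOf S (m + n) (x + y) := by
  obtain ⟨g, hg, rfl⟩ := hx
  obtain ⟨h, hh, rfl⟩ := hy
  refine ⟨Fin.append g h, Fin.addCases (by simpa using hg) (by simpa using hh), ?_⟩
  simp [Fin.sum_univ_add]

theorem IsSumOf.neg (hSsym : ∀ s ∈ S, -s ∈ S) {n : ℕ} {x : Fin d → ℤ} (hx : IsSumOf S n x) :
    IsSumOf S n (-x) := by
  obtain ⟨g, hg, rfl⟩ := hx
  exact ⟨-g, fun i => hSsym _ (hg i), by simp⟩

theorem IsSumOf.nsmul {m : ℕ} {x : Fin d → ℤ} (hx : IsSumOf S m x) (n : ℕ) :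
    IsSumOf S (n * m) (n • x) := by
  induction n with
  | zero => simpa using isSumOf_zero
  | succ n ih => simpa [succ_nsmul, add_mul] using ih.add hx

theorem exists_isSumOf (hSsym : ∀ s ∈ S, -s ∈ S)
    (hSgen : AddSubgroup.closure (S : Set (Fin d → ℤ)) = ⊤) (x : Fin d → ℤ) :
    ∃ n, IsSumOf S n x := by
  have hx : x ∈ AddSubgroup.closure (S : Set (Fin d → ℤ)) := hSgen ▸ AddSubgroup.mem_top x
  induction hx using AddSubgroup.closure_induction with
  | mem s hs => exact ⟨1, by simpa using isSumOf_sum (Finset.singleton_subset_iff.2 hs)⟩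
  | zero => exact ⟨0, isSumOf_zero⟩
  | add x y _ _ hx hy => exact ⟨_, hx.choose_spec.add hy.choose_spec⟩
  | neg x _ hx => exact ⟨_, hx.choose_spec.neg hSsym⟩

theorem wordLength_le {n : ℕ} {x : Fin d → ℤ} (h : IsSumOf S n x) : wordLength S x ≤ n :=
  Nat.sInf_le h

theorem isSumOf_wordLength (hSsym : ∀ s ∈ S, -s ∈ S)
    (hSgen : AddSubgroup.closure (S : Set (Fin d → ℤ)) = ⊤) (x : Fin d → ℤ) :
    IsSumOf S (wordLength S x) x :=
  Nat.sInf_mem (exists_isSumOf hSsym hSgen x)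

theorem wordLength_add_le (hSsym : ∀ s ∈ S, -s ∈ S)
    (hSgen : AddSubgroup.closure (S : Set (Fin d → ℤ)) = ⊤) (x y : Fin d → ℤ) :
    wordLength S (x + y) ≤ wordLength S x + wordLength S y :=
  wordLength_le ((isSumOf_wordLength hSsym hSgen x).add (isSumOf_wordLength hSsym hSgen y))

theorem le_wordLength (hSsym : ∀ s ∈ S, -s ∈ S)
    (hSgen : AddSubgroup.closure (S : Set (Fin d → ℤ)) = ⊤) {τ : (Fin d → ℤ) →+ ℝ}
    (hτ : ∀ s ∈ S, τ s ≤ 1) (x : Fin d → ℤ) : τ x ≤ wordLength S x := by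
  obtain ⟨g, hg, hsum⟩ := isSumOf_wordLength hSsym hSgen x
  calc τ x = ∑ i, τ (g i) := by rw [← map_sum, hsum]
    _ ≤ ∑ _i : Fin (wordLength S x), (1 : ℝ) := Finset.sum_le_sum fun i _ => hτ _ (hg i)
    _ = wordLength S x := by simp

theorem wordLength_le_add_wordLength_sub (hSsym : ∀ s ∈ S, -s ∈ S)
    (hSgen : AddSubgroup.closure (S : Set (Fin d → ℤ)) = ⊤) (x y : Fin d → ℤ) :
    wordLength S x ≤ wordLength S y + wordLength S (x - y) := by
  simpa using wordLength_add_le hSsym hSgen y (x - y)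

end WordLength

noncomputable def busemannDiff {d : ℕ} (S : Finset (Fin d → ℤ)) (z v : Fin d → ℤ) (n : ℕ) : ℤ :=
  wordLength S (n • z) - wordLength S (n • z - v)

/-- The eventual value `m(v)`; the `⨆` is a junk value unless the sequence is bounded above,
which `tendsto_busemannLimit` establishes. -/
noncomputable def busemannLimit {d : ℕ} (S : Finset (Fin d → ℤ)) (z v : Fin d → ℤ) : ℤ :=
  ⨆ n, busemannDiff S z v n

section Face

variable {d : ℕ} {S F : Finset (Fin d → ℤ)} {τ : (Fin d → ℤ) →+ ℝ}

theorem map_sum_eq_card (hτF : ∀ s ∈ F, τ s = 1) : τ (∑ s ∈ F, s) = F.card := by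
  simp [map_sum, Finset.sum_congr rfl hτF]

theorem wordLength_nsmul_sum_face (hSsym : ∀ s ∈ S, -s ∈ S)
    (hSgen : AddSubgroup.closure (S : Set (Fin d → ℤ)) = ⊤) (hτS : ∀ s ∈ S, τ s ≤ 1)
    (hFS : F ⊆ S) (hτF : ∀ s ∈ F, τ s = 1) (n : ℕ) :
    wordLength S (n • ∑ s ∈ F, s) = n * F.card := by
  refine le_antisymm (wordLength_le ((isSumOf_sum hFS).nsmul n)) ?_
  have h := le_wordLength hSsym hSgen hτS (n • ∑ s ∈ F, s)
  rw [map_nsmul, map_sum_eq_card hτF, nsmul_eq_mul] at h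
  exact_mod_cast h

theorem busemannDiff_monotone (hSsym : ∀ s ∈ S, -s ∈ S)
    (hSgen : AddSubgroup.closure (S : Set (Fin d → ℤ)) = ⊤) (hτS : ∀ s ∈ S, τ s ≤ 1)
    (hFS : F ⊆ S) (hτF : ∀ s ∈ F, τ s = 1) (v : Fin d → ℤ) :
    Monotone (busemannDiff S (∑ s ∈ F, s) v) := by
  refine monotone_nat_of_le_succ fun n => ?_
  have h := wordLength_le_add_wordLength_sub hSsym hSgen ((n + 1) • ∑ s ∈ F, s - v)
    (n • ∑ s ∈ F, s - v)
  have hz := wordLength_le (isSumOf_sum hFS)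
  rw [show (n + 1) • ∑ s ∈ F, s - v - (n • ∑ s ∈ F, s - v) = ∑ s ∈ F, s by
    rw [succ_nsmul]; abel] at h
  simp only [busemannDiff, wordLength_nsmul_sum_face hSsym hSgen hτS hFS hτF]
  push_cast [add_mul, one_mul]
  omega

theorem busemannDiff_le (hSsym : ∀ s ∈ S, -s ∈ S)
    (hSgen : AddSubgroup.closure (S : Set (Fin d → ℤ)) = ⊤) (hτS : ∀ s ∈ S, τ s ≤ 1)
    (hFS : F ⊆ S) (hτF : ∀ s ∈ F, τ s = 1) (v : Fin d → ℤ) (n : ℕ) :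
    (busemannDiff S (∑ s ∈ F, s) v n : ℝ) ≤ τ v := by
  have h := le_wordLength hSsym hSgen hτS (n • ∑ s ∈ F, s - v)
  rw [map_sub, map_nsmul, map_sum_eq_card hτF, nsmul_eq_mul] at h
  simp only [busemannDiff, wordLength_nsmul_sum_face hSsym hSgen hτS hFS hτF]
  push_cast
  linarith

theorem busemannDiff_add_le (hSsym : ∀ s ∈ S, -s ∈ S)
    (hSgen : AddSubgroup.closure (S : Set (Fin d → ℤ)) = ⊤) (z v : Fin d → ℤ) {s : Fin d → ℤ}
    (hs : s ∈ S) (n : ℕ) :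
    busemannDiff S z (v + s) n ≤ busemannDiff S z v n + 1 := by
  have h := wordLength_le_add_wordLength_sub hSsym hSgen (n • z - v) (n • z - (v + s))
  have hs1 := wordLength_le (isSumOf_sum (Finset.singleton_subset_iff.2 hs))
  rw [show n • z - v - (n • z - (v + s)) = s by abel] at h
  simp only [busemannDiff, Finset.sum_singleton, Finset.card_singleton] at hs1 ⊢
  omega

theorem busemannDiff_add_le_succ (hSsym : ∀ s ∈ S, -s ∈ S)
    (hSgen : AddSubgroup.closure (S : Set (Fin d → ℤ)) = ⊤) (hτS : ∀ s ∈ S, τ s ≤ 1)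
    (hFS : F ⊆ S) (hτF : ∀ s ∈ F, τ s = 1) (v : Fin d → ℤ) {s : Fin d → ℤ} (hs : s ∈ F)
    (n : ℕ) :
    busemannDiff S (∑ s ∈ F, s) v n + 1 ≤ busemannDiff S (∑ s ∈ F, s) (v + s) (n + 1) := by
  classical
  have h := wordLength_le_add_wordLength_sub hSsym hSgen ((n + 1) • ∑ s ∈ F, s - (v + s))
    (n • ∑ s ∈ F, s - v)
  have herase := wordLength_le (isSumOf_sum ((F.erase_subset s).trans hFS))
  have hcard := Finset.card_erase_add_one hs
  rw [show (n + 1) • ∑ s ∈ F, s - (v + s) - (n • ∑ s ∈ F, s - v) = ∑ t ∈ F.erase s, t by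
    rw [succ_nsmul, Finset.sum_erase_eq_sub hs]; abel] at h
  simp only [busemannDiff, wordLength_nsmul_sum_face hSsym hSgen hτS hFS hτF]
  push_cast [add_mul, one_mul]
  omega

theorem tendsto_busemannLimit (hSsym : ∀ s ∈ S, -s ∈ S)
    (hSgen : AddSubgroup.closure (S : Set (Fin d → ℤ)) = ⊤) (hτS : ∀ s ∈ S, τ s ≤ 1)
    (hFS : F ⊆ S) (hτF : ∀ s ∈ F, τ s = 1) (v : Fin d → ℤ) :
    Tendsto (busemannDiff S (∑ s ∈ F, s) v) atTop (𝓝 (busemannLimit S (∑ s ∈ F, s) v)) := by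
  refine tendsto_atTop_ciSup (busemannDiff_monotone hSsym hSgen hτS hFS hτF v)
    ⟨⌈τ v⌉, ?_⟩
  rintro _ ⟨n, rfl⟩
  exact Int.cast_le.1 ((busemannDiff_le hSsym hSgen hτS hFS hτF v n).trans (Int.le_ceil _))

theorem busemannLimit_add_mem (hSsym : ∀ s ∈ S, -s ∈ S)
    (hSgen : AddSubgroup.closure (S : Set (Fin d → ℤ)) = ⊤) (hτS : ∀ s ∈ S, τ s ≤ 1)
    (hFS : F ⊆ S) (hτF : ∀ s ∈ F, τ s = 1) (v : Fin d → ℤ) {s : Fin d → ℤ} (hs : s ∈ F) :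
    busemannLimit S (∑ s ∈ F, s) (v + s) = busemannLimit S (∑ s ∈ F, s) v + 1 := by
  have hv := tendsto_busemannLimit hSsym hSgen hτS hFS hτF v
  have hvs := tendsto_busemannLimit hSsym hSgen hτS hFS hτF (v + s)
  refine le_antisymm (le_of_tendsto_of_tendsto' hvs (hv.add_const 1)
    fun n => busemannDiff_add_le hSsym hSgen _ v (hFS hs) n) ?_
  exact le_of_tendsto_of_tendsto' (hv.add_const 1) ((tendsto_add_atTop_iff_nat 1).2 hvs)
    fun n => busemannDiff_add_le_succ hSsym hSgen hτS hFS hτF v hs n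

theorem busemannLimit_add_mem_closure (hSsym : ∀ s ∈ S, -s ∈ S)
    (hSgen : AddSubgroup.closure (S : Set (Fin d → ℤ)) = ⊤) (hτS : ∀ s ∈ S, τ s ≤ 1)
    (hFS : F ⊆ S) (hτF : ∀ s ∈ F, τ s = 1) (v : Fin d → ℤ) {u : Fin d → ℤ}
    (hu : u ∈ AddSubgroup.closure (F : Set (Fin d → ℤ))) :
    (busemannLimit S (∑ s ∈ F, s) (v + u) : ℝ) = busemannLimit S (∑ s ∈ F, s) v + τ u := by
  induction hu using AddSubgroup.closure_induction generalizing v with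
  | mem s hs =>
    rw [busemannLimit_add_mem hSsym hSgen hτS hFS hτF v hs, hτF s hs]
    push_cast; rfl
  | zero => simp
  | add x y _ _ hx hy => rw [← add_assoc, hy, hx, map_add, add_assoc]
  | neg x _ hx =>
    have := hx (v + -x)
    rw [neg_add_cancel_right] at this
    rw [this, map_neg]
    ring

end Face

theorem stmt16_general {d : ℕ} (S : Finset (Fin d → ℤ))
    (hSsym : ∀ s ∈ S, -s ∈ S)
    (hSgen : AddSubgroup.closure (S : Set (Fin d → ℤ)) = ⊤)
    (σ : (Fin d → ℝ) →ₗ[ℝ] ℝ)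
    (hσ : ∀ s ∈ S, σ (fun i => (s i : ℝ)) ≤ 1)
    (F : Finset (Fin d → ℤ))
    (hF : ∀ s : Fin d → ℤ, s ∈ F ↔ s ∈ S ∧ σ (fun i => (s i : ℝ)) = 1)
    (zF : Fin d → ℤ) (hzF : zF = ∑ s ∈ F, s) :
    ∀ y : Fin d → ℤ, ∀ u ∈ AddSubgroup.closure (F : Set (Fin d → ℤ)),
      ∃ (my myu : ℤ) (N : ℕ),
        (∀ n : ℕ, N ≤ n →
          (wordLength S (n • zF) : ℤ) - (wordLength S (n • zF - y) : ℤ) = my ∧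
          (wordLength S (n • zF) : ℤ) - (wordLength S (n • zF - y - u) : ℤ) = myu) ∧
        (myu : ℝ) = (my : ℝ) + σ (fun i => (u i : ℝ)) := by
  intro y u hu
  subst hzF
  set τ : (Fin d → ℤ) →+ ℝ := σ.toAddMonoidHom.comp ((Int.castAddHom ℝ).compLeft (Fin d))
  have hFS : F ⊆ S := fun s hs => ((hF s).1 hs).1
  have hτF : ∀ s ∈ F, τ s = 1 := fun s hs => ((hF s).1 hs).2
  have hev : ∀ v, ∀ᶠ n in atTop, busemannDiff S (∑ s ∈ F, s) v n = busemannLimit S (∑ s ∈ F, s) v :=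
    fun v => by
      simpa [nhds_discrete, tendsto_pure] using tendsto_busemannLimit hSsym hSgen hσ hFS hτF v
  obtain ⟨N, hN⟩ := eventually_atTop.1 ((hev y).and (hev (y + u)))
  refine ⟨_, _, N, fun n hn => ?_, busemannLimit_add_mem_closure hSsym hSgen hσ hFS hτF y hu⟩
  rw [sub_sub]
  exact hN n hn

/-- Proposition 8.4 of Rieffel: with `F`, `z_F`, `G_F` as for a face of the convex hull
of `S`, for any `y ∈ ℤ^d` and `u ∈ G_F`, the sequences
`n ↦ ℓ_S(n·z_F) − ℓ_S(n·z_F − y)` and `n ↦ ℓ_S(n·z_F) − ℓ_S(n·z_F − y − u)` are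
eventually constant with eventual values `m(y)`, `m(y+u)` satisfying
`m(y+u) = m(y) + σ(u)`; that is, `φ_{y+u}(b_F) = φ_y(b_F) + σ(u)`. -/
theorem stmt16 {d : ℕ} (S : Finset (Fin d → ℤ))
    (hSsym : ∀ s ∈ S, -s ∈ S) (hS0 : (0 : Fin d → ℤ) ∉ S)
    (hSgen : AddSubgroup.closure (S : Set (Fin d → ℤ)) = ⊤)
    (σ : (Fin d → ℝ) →ₗ[ℝ] ℝ)
    (hσ : ∀ s ∈ S, σ (fun i => (s i : ℝ)) ≤ 1)
    (F : Finset (Fin d → ℤ))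
    (hF : ∀ s : Fin d → ℤ, s ∈ F ↔ s ∈ S ∧ σ (fun i => (s i : ℝ)) = 1)
    (hFne : F.Nonempty)
    (zF : Fin d → ℤ) (hzF : zF = ∑ s ∈ F, s) :
    ∀ y : Fin d → ℤ, ∀ u ∈ AddSubgroup.closure (F : Set (Fin d → ℤ)),
      ∃ (my myu : ℤ) (N : ℕ),
        (∀ n : ℕ, N ≤ n →
          (wordLength S (n • zF) : ℤ) - (wordLength S (n • zF - y) : ℤ) = my ∧
          (wordLength S (n • zF) : ℤ) - (wordLength S (n • zF - y - u) : ℤ) = myu) ∧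
        (myu : ℝ) = (my : ℝ) + σ (fun i => (u i : ℝ)) :=
  stmt16_general S hSsym hSgen σ hσ F hF zF hzF
end
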